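/- arXiv:1509.03758 — 4 statements merged into one kernel-verified Lean document; each statement's English description precedes it below -/
import Mathlib

section
/- Let 0 < t < 1. Then the measure μ^B_t = Σ_{k=0}^∞ (1−t)·t^k·δ_{(2k+1)(1−t)} is a probability measure on ℝ, and for every n ≥ 0 its n-th moment equals the Eulerian polynomial of type B evaluated at t: Σ_{k=0}^∞ (1−t)^{n+1} (2k+1)^n t^k = P^B_n(t). -/
open MeasureTheory Finset

/-- Number of descents of a finite sequence given as a list. -/
def descCount {α : Type*} [LT α] [DecidableRel ((· < ·) : α → α → Prop)] : List α → ℕ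
  | a :: b :: rest => (if b < a then 1 else 0) + descCount (b :: rest)
  | _ => 0

/-- Type A Eulerian number: permutations of {1,…,n} with k descents. -/
def eulerianA (n k : ℕ) : ℕ :=
  Fintype.card {σ : Equiv.Perm (Fin n) // descCount (List.ofFn fun i => σ i) = k}

/-- Eulerian polynomial of type A. -/
noncomputable def polyA (n : ℕ) (t : ℝ) : ℝ :=
  ∑ k ∈ Finset.range (n + 1), (eulerianA n k : ℝ) * t ^ k

/-- The underlying set {-n, …, -1, 0, 1, …, n}. -/
abbrev BSet (n : ℕ) : Type := {x : ℤ // x ∈ Finset.Icc (-(n : ℤ)) (n : ℤ)}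

def negB {n : ℕ} (x : BSet n) : BSet n :=
  ⟨-x.1, by have := x.2; simp only [Finset.mem_Icc] at *; omega⟩

def posB {n : ℕ} (i : Fin n) : BSet n :=
  ⟨((i : ℕ) : ℤ) + 1, by have := i.isLt; simp only [Finset.mem_Icc]; omega⟩

/-- A permutation of {-n,…,n} is a signed permutation if σ(-k) = -σ(k). -/
def IsSigned {n : ℕ} (σ : Equiv.Perm (BSet n)) : Prop :=
  ∀ x : BSet n, (σ (negB x)).1 = -((σ x).1)

noncomputable instance {n : ℕ} (σ : Equiv.Perm (BSet n)) : Decidable (IsSigned σ) :=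
  inferInstanceAs (Decidable (∀ x : BSet n, (σ (negB x)).1 = -((σ x).1)))

/-- Number of descents of the sequence (0, σ(1), …, σ(n)). -/
def descB {n : ℕ} (σ : Equiv.Perm (BSet n)) : ℕ :=
  descCount ((0 : ℤ) :: List.ofFn fun i : Fin n => (σ (posB i)).1)

/-- Number of negative terms among σ(1), …, σ(n). -/
def negCount {n : ℕ} (σ : Equiv.Perm (BSet n)) : ℕ :=
  (Finset.univ.filter fun i : Fin n => (σ (posB i)).1 < 0).card

/-- Type B Eulerian number. -/
noncomputable def eulerianB (n k : ℕ) : ℕ :=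
  Fintype.card {σ : Equiv.Perm (BSet n) // IsSigned σ ∧ descB σ = k}

/-- Primary type D Eulerian number. -/
noncomputable def eulerianD (n k : ℕ) : ℕ :=
  Fintype.card {σ : Equiv.Perm (BSet n) //
    (IsSigned σ ∧ Even (negCount σ)) ∧ descB σ = k}

/-- Complementary type D Eulerian number. -/
noncomputable def eulerianDt (n k : ℕ) : ℕ :=
  Fintype.card {σ : Equiv.Perm (BSet n) //
    (IsSigned σ ∧ ¬ Even (negCount σ)) ∧ descB σ = k}

noncomputable def polyB (n : ℕ) (t : ℝ) : ℝ :=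
  ∑ k ∈ Finset.range (n + 1), (eulerianB n k : ℝ) * t ^ k

noncomputable def polyD (n : ℕ) (t : ℝ) : ℝ :=
  ∑ k ∈ Finset.range (n + 1), (eulerianD n k : ℝ) * t ^ k

noncomputable def polyDt (n : ℕ) (t : ℝ) : ℝ :=
  ∑ k ∈ Finset.range (n + 1), (eulerianDt n k : ℝ) * t ^ k

/-- μ^B_t = Σ_{k=0}^∞ (1−t) t^k δ_{(2k+1)(1−t)} for 0 < t < 1. -/
noncomputable def muB_lt (t : ℝ) : Measure ℝ :=
  Measure.sum fun k : ℕ =>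
    (ENNReal.ofReal ((1 - t) * t ^ k)) • Measure.dirac ((2 * (k : ℝ) + 1) * (1 - t))

/-!
Encode a signed permutation by its word `(σ(1), …, σ(n))`. The words of length `n + 1` arise
uniquely by inserting `±(n + 1)` into a word of length `n`, and of the `2n + 2` insertions into a
word with `d` descents, `2d + 1` keep `d` descents and `2n + 1 - 2d` create one more. This
recurrence gives the type B Worpitzky identity `∑_σ C(k + n - des σ, n) = (2k + 1)^n`; multiplying
by `t^k`, summing, and using `∑_k C(k + n - d, n) t^k = t^d / (1 - t)^(n + 1)` yields
`∑_k (2k + 1)^n t^k = P^B_n(t) / (1 - t)^(n + 1)`, which is the moment identity.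
-/

section Descents

variable {α : Type*} [LinearOrder α]

theorem descCount_cons_cons (a b : α) (l : List α) :
    descCount (a :: b :: l) = (if b < a then 1 else 0) + descCount (b :: l) := rfl

theorem descCount_cons_le_length (a : α) (l : List α) : descCount (a :: l) ≤ l.length := by
  induction l generalizing a with
  | nil => simp [descCount]
  | cons b l ih =>
    rw [descCount_cons_cons, List.length_cons]
    have := ih b
    split <;> omega

/-- A new maximum keeps the number of descents when inserted into a descent or at the end, and
adds one descent in each of the other slots. -/
theorem sum_descCount_insertIdx_of_max (g : ℕ → ℕ) (a v : α) (l : List α) (hav : a < v)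
    (hlv : ∀ x ∈ l, x < v) :
    ∑ p ∈ range (l.length + 1), g (descCount (a :: l.insertIdx p v)) =
      (descCount (a :: l) + 1) * g (descCount (a :: l)) +
        (l.length - descCount (a :: l)) * g (descCount (a :: l) + 1) := by
  induction l generalizing a g with
  | nil => simp [descCount, not_lt.2 hav.le]
  | cons b l ih =>
    have hbv : b < v := hlv b (by simp)
    have hD := descCount_cons_le_length b l
    rw [sum_range_succ', List.length_cons]
    simp only [List.insertIdx_succ_cons, descCount_cons_cons a b]
    rw [ih (fun j => g ((if b < a then 1 else 0) + j)) b hbv fun x hx => hlv x (by simp [hx])]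
    simp only [List.insertIdx_zero, descCount_cons_cons, if_neg (not_lt.2 hav.le), if_pos hbv]
    set D := descCount (b :: l)
    split <;> simp only [zero_add]
    · rw [show l.length + 1 - (1 + D) = l.length - D by omega, ← add_assoc]
      ring
    · rw [show l.length + 1 - D = l.length - D + 1 by omega, add_comm 1 D]
      ring

/-- A new minimum keeps the number of descents when inserted into a descent, and adds one descent
in each of the other slots, the end included. -/
theorem sum_descCount_insertIdx_of_min (g : ℕ → ℕ) (a v : α) (l : List α) (hva : v < a)
    (hvl : ∀ x ∈ l, v < x) :
    ∑ p ∈ range (l.length + 1), g (descCount (a :: l.insertIdx p v)) =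
      descCount (a :: l) * g (descCount (a :: l)) +
        (l.length + 1 - descCount (a :: l)) * g (descCount (a :: l) + 1) := by
  induction l generalizing a g with
  | nil => simp [descCount, hva]
  | cons b l ih =>
    have hvb : v < b := hvl b (by simp)
    have hD := descCount_cons_le_length b l
    rw [sum_range_succ', List.length_cons]
    simp only [List.insertIdx_succ_cons, descCount_cons_cons a b]
    rw [ih (fun j => g ((if b < a then 1 else 0) + j)) b hvb fun x hx => hvl x (by simp [hx])]
    simp only [List.insertIdx_zero, descCount_cons_cons, if_pos hva, if_neg (not_lt.2 hvb.le)]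
    set D := descCount (b :: l)
    split <;> simp only [zero_add]
    · rw [show l.length + 1 + 1 - (1 + D) = l.length + 1 - D by omega, ← add_assoc]
      ring
    · rw [show l.length + 1 + 1 - D = l.length + 1 - D + 1 by omega, add_comm 1 D]
      ring

end Descents

theorem List.eq_of_insertIdx_eq_insertIdx {α : Type*} {l₁ l₂ : List α} {p₁ p₂ : ℕ} {v₁ v₂ : α}
    (hp₁ : p₁ ≤ l₁.length) (hp₂ : p₂ ≤ l₂.length) (hv₁ : v₁ ∉ l₂) (hv₂ : v₂ ∉ l₁)
    (h : l₁.insertIdx p₁ v₁ = l₂.insertIdx p₂ v₂) : l₁ = l₂ ∧ p₁ = p₂ ∧ v₁ = v₂ := by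
  have no_lt : ∀ {l₁ l₂ : List α} {p₁ p₂ : ℕ} {v₁ v₂ : α}, p₁ ≤ l₁.length → v₁ ∉ l₂ →
      l₁.insertIdx p₁ v₁ = l₂.insertIdx p₂ v₂ → ¬p₁ < p₂ := by
    intro l₁ l₂ p₁ p₂ v₁ v₂ hp hv h hlt
    have := congr_arg (·[p₁]?) h
    simp only [List.getElem?_insertIdx_self, if_pos hp, List.getElem?_insertIdx_of_lt hlt] at this
    exact hv (List.mem_of_getElem? this.symm)
  obtain rfl : p₁ = p₂ := by
    have := no_lt hp₁ hv₁ h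
    have := no_lt hp₂ hv₂ h.symm
    omega
  obtain rfl : v₁ = v₂ := by
    simpa [List.getElem?_insertIdx_self, hp₁, hp₂] using congr_arg (·[p₁]?) h
  exact ⟨List.insertIdx_injective p₁ v₁ h, rfl, rfl⟩

section SignedWords

def signedDesc (l : List ℤ) : ℕ := descCount ((0 : ℤ) :: l)

/-- The words `(σ(1), …, σ(n))` of the signed permutations of `{±1, …, ±n}`. -/
def signedWords : ℕ → Finset (List ℤ)
  | 0 => {[]}
  | n + 1 => (signedWords n ×ˢ range (n + 1) ×ˢ {(n : ℤ) + 1, -((n : ℤ) + 1)}).image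
      fun x => x.1.insertIdx x.2.1 x.2.2

theorem List.range'_one_succ_perm (n : ℕ) :
    (List.range' 1 (n + 1)).Perm ((n + 1) :: List.range' 1 n) := by
  rw [List.range'_concat, one_mul, add_comm 1 n]
  exact List.perm_append_singleton _ _

theorem mem_signedWords_iff {n : ℕ} {l : List ℤ} :
    l ∈ signedWords n ↔ (l.map Int.natAbs).Perm (List.range' 1 n) := by
  induction n generalizing l with
  | zero => simp [signedWords]
  | succ n ih =>
    simp only [signedWords, mem_image, mem_product, mem_range, mem_insert, mem_singleton,
      Prod.exists]
    constructor
    · rintro ⟨l₀, p, v, ⟨hl₀, hp, hv⟩, rfl⟩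
      have hlen : l₀.length = n := by simpa using (ih.1 hl₀).length_eq
      have hv : v.natAbs = n + 1 := by omega
      rw [List.map_insertIdx, hv]
      exact (List.perm_insertIdx _ _ (by simpa [hlen] using hp)).trans
        (((ih.1 hl₀).cons _).trans (List.range'_one_succ_perm n).symm)
    · intro h
      have hlen : l.length = n + 1 := by simpa using h.length_eq
      obtain ⟨x, hx, hxabs⟩ := List.mem_map.1 <| h.symm.subset (List.mem_range'_1.2 (by omega) :
        n + 1 ∈ List.range' 1 (n + 1))
      obtain ⟨p, hp, rfl⟩ := List.getElem_of_mem hx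
      have hperm : ((l.eraseIdx p).map Int.natAbs).Perm (List.range' 1 n) := by
        have := (List.getElem_cons_eraseIdx_perm (l := l.map Int.natAbs) (by simpa using hp)).trans
          (h.trans (List.range'_one_succ_perm n))
        simp only [List.getElem_map, hxabs] at this
        rw [← List.eraseIdx_map]
        exact this.cons_inv
      refine ⟨l.eraseIdx p, p, l[p], ⟨ih.2 hperm, by omega, by omega⟩, ?_⟩
      exact List.insertIdx_eraseIdx_getElem hp

variable {n : ℕ} {l : List ℤ}

theorem length_of_mem_signedWords (hl : l ∈ signedWords n) : l.length = n := by
  simpa using (mem_signedWords_iff.1 hl).length_eq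

theorem natAbs_mem_Icc_of_mem_signedWords (hl : l ∈ signedWords n) {x : ℤ} (hx : x ∈ l) :
    1 ≤ x.natAbs ∧ x.natAbs ≤ n := by
  have := (mem_signedWords_iff.1 hl).subset (List.mem_map_of_mem hx)
  rw [List.mem_range'_1] at this
  omega

theorem signedDesc_le (hl : l ∈ signedWords n) : signedDesc l ≤ n :=
  length_of_mem_signedWords hl ▸ descCount_cons_le_length 0 l

theorem sum_signedWords_succ (n : ℕ) (g : ℕ → ℕ) :
    ∑ l ∈ signedWords (n + 1), g (signedDesc l) =
      ∑ l ∈ signedWords n, ((2 * signedDesc l + 1) * g (signedDesc l) +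
        (2 * n + 1 - 2 * signedDesc l) * g (signedDesc l + 1)) := by
  rw [signedWords, sum_image, sum_product]
  · refine sum_congr rfl fun l hl => ?_
    have hlen := length_of_mem_signedWords hl
    have habs := fun x hx => natAbs_mem_Icc_of_mem_signedWords hl (x := x) hx
    have hD := signedDesc_le hl
    have hmax : ∑ p ∈ range (n + 1), g (signedDesc (l.insertIdx p ((n : ℤ) + 1))) =
        (signedDesc l + 1) * g (signedDesc l) + (n - signedDesc l) * g (signedDesc l + 1) :=
      hlen ▸ sum_descCount_insertIdx_of_max g 0 _ l (by omega) fun x hx => by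
        have := habs x hx; omega
    have hmin : ∑ p ∈ range (n + 1), g (signedDesc (l.insertIdx p (-((n : ℤ) + 1)))) =
        signedDesc l * g (signedDesc l) + (n + 1 - signedDesc l) * g (signedDesc l + 1) :=
      hlen ▸ sum_descCount_insertIdx_of_min g 0 _ l (by omega) fun x hx => by
        have := habs x hx; omega
    rw [sum_product_right, sum_pair (by omega), hmax, hmin,
      show 2 * n + 1 - 2 * signedDesc l = (n - signedDesc l) + (n + 1 - signedDesc l) by omega]
    ring
  · rintro ⟨l₁, p₁, v₁⟩ h₁ ⟨l₂, p₂, v₂⟩ h₂ h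
    simp only [coe_product, Set.mem_prod, mem_coe, mem_range, mem_insert, mem_singleton] at h₁ h₂
    have not_mem {l v} (hl : l ∈ signedWords n) (hv : v = (n : ℤ) + 1 ∨ v = -((n : ℤ) + 1)) :
        v ∉ l := fun hvl => by
      have := natAbs_mem_Icc_of_mem_signedWords hl hvl
      omega
    obtain ⟨rfl, rfl, rfl⟩ := List.eq_of_insertIdx_eq_insertIdx (p₁ := p₁) (p₂ := p₂)
      (by rw [length_of_mem_signedWords h₁.1]; omega)
      (by rw [length_of_mem_signedWords h₂.1]; omega) (not_mem h₂.1 h₁.2.2) (not_mem h₁.1 h₂.2.2) h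
    rfl

end SignedWords

section Worpitzky

theorem choose_step_typeB {n k D : ℕ} (hD : D ≤ n) :
    (2 * D + 1) * (k + n + 1 - D).choose (n + 1) + (2 * n + 1 - 2 * D) * (k + n - D).choose (n + 1)
      = (2 * k + 1) * (k + n - D).choose n := by
  obtain ⟨r, rfl⟩ := Nat.exists_eq_add_of_le hD
  rcases le_or_gt D k with hk | hk
  · obtain ⟨m, rfl⟩ := Nat.exists_eq_add_of_le hk
    have h₁ := Nat.add_one_mul_choose_eq (m + (D + r)) (D + r)
    have h₂ := Nat.choose_succ_right_eq (m + (D + r)) (D + r)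
    rw [Nat.add_sub_cancel] at h₂
    rw [show D + m + (D + r) + 1 - D = m + (D + r) + 1 by omega,
      show D + m + (D + r) - D = m + (D + r) by omega,
      show 2 * (D + r) + 1 - 2 * D = 2 * r + 1 by omega]
    apply Nat.eq_of_mul_eq_mul_left (Nat.succ_pos (D + r))
    zify at h₁ h₂ ⊢
    linear_combination -(2 * (D : ℤ) + 1) * h₁ + (2 * (r : ℤ) + 1) * h₂
  · rw [Nat.choose_eq_zero_of_lt (by omega : k + (D + r) + 1 - D < D + r + 1),
      Nat.choose_eq_zero_of_lt (by omega : k + (D + r) - D < D + r + 1),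
      Nat.choose_eq_zero_of_lt (by omega : k + (D + r) - D < D + r)]
    simp

/-- Type B Worpitzky identity. -/
theorem sum_signedWords_choose (n k : ℕ) :
    ∑ l ∈ signedWords n, (k + n - signedDesc l).choose n = (2 * k + 1) ^ n := by
  induction n with
  | zero => simp [signedWords, signedDesc]
  | succ n ih =>
    rw [sum_signedWords_succ n fun j => (k + (n + 1) - j).choose (n + 1), pow_succ', ← ih,
      mul_sum]
    refine sum_congr rfl fun l hl => ?_
    rw [← choose_step_typeB (signedDesc_le hl)]
    congr 3; omega

end Worpitzky

section SignedPermutations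

variable {n : ℕ}

def wordB (σ : Equiv.Perm (BSet n)) : List ℤ := List.ofFn fun i : Fin n => (σ (posB i)).1

theorem descB_eq_signedDesc_wordB (σ : Equiv.Perm (BSet n)) : descB σ = signedDesc (wordB σ) :=
  rfl

theorem getD_wordB (σ : Equiv.Perm (BSet n)) (i : Fin n) :
    (wordB σ).getD i 0 = (σ (posB i)).1 := by
  simp [wordB]

@[simp] theorem val_negB (x : BSet n) : (negB x).1 = -x.1 := rfl

@[simp] theorem val_posB (i : Fin n) : (posB i).1 = i + 1 := rfl

theorem exists_posB_eq {x : BSet n} (hx : 0 < x.1) : ∃ i, posB i = x := by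
  have := x.2
  rw [mem_Icc] at this
  exact ⟨⟨x.1.toNat - 1, by omega⟩, Subtype.ext (by simp; omega)⟩

@[simp] theorem negB_negB (x : BSet n) : negB (negB x) = x := Subtype.ext (neg_neg x.1)

theorem negB_eq_self_iff {x : BSet n} : negB x = x ↔ x.1 = 0 := by
  rw [Subtype.ext_iff]
  change -x.1 = x.1 ↔ _
  omega

def signedExt (l : List ℤ) (x : ℤ) : ℤ := x.sign * l.getD (x.natAbs - 1) 0

@[simp] theorem signedExt_zero (l : List ℤ) : signedExt l 0 = 0 := by
  simp [signedExt]

theorem signedExt_neg (l : List ℤ) (x : ℤ) : signedExt l (-x) = -signedExt l x := by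
  simp [signedExt]

theorem natAbs_signedExt (l : List ℤ) {x : ℤ} (hx0 : x ≠ 0) :
    (signedExt l x).natAbs = (l.getD (x.natAbs - 1) 0).natAbs := by
  rw [signedExt, Int.natAbs_mul, Int.natAbs_sign_of_ne_zero hx0, one_mul]

section OfWord

variable {l : List ℤ} (hl : l ∈ signedWords n)
include hl

theorem natAbs_signedExt_mem_Icc {x : ℤ} (hx0 : x ≠ 0) (hxn : x.natAbs ≤ n) :
    1 ≤ (signedExt l x).natAbs ∧ (signedExt l x).natAbs ≤ n := by
  have hlen := length_of_mem_signedWords hl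
  rw [natAbs_signedExt l hx0, List.getD_eq_getElem _ _ (by omega : x.natAbs - 1 < l.length)]
  exact natAbs_mem_Icc_of_mem_signedWords hl (List.getElem_mem _)

theorem signedExt_mem_Icc {x : ℤ} (hx : x ∈ Icc (-(n : ℤ)) n) :
    signedExt l x ∈ Icc (-(n : ℤ)) n := by
  rw [mem_Icc] at hx ⊢
  rcases eq_or_ne x 0 with rfl | hx0
  · simp [signedExt]
  · have := natAbs_signedExt_mem_Icc hl hx0 (by omega)
    omega

theorem signedExt_injOn {x y : ℤ} (hx : x ∈ Icc (-(n : ℤ)) n) (hy : y ∈ Icc (-(n : ℤ)) n)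
    (h : signedExt l x = signedExt l y) : x = y := by
  rw [mem_Icc] at hx hy
  rcases eq_or_ne x 0 with rfl | hx0
  · by_contra hy0
    have := (natAbs_signedExt_mem_Icc hl (Ne.symm hy0) (by omega)).1
    rw [← h, signedExt_zero] at this
    simp at this
  rcases eq_or_ne y 0 with rfl | hy0
  · have := (natAbs_signedExt_mem_Icc hl hx0 (by omega)).1
    rw [h, signedExt_zero] at this
    simp at this
  have hy1 := (natAbs_signedExt_mem_Icc hl hy0 (by omega)).1
  have hlen := length_of_mem_signedWords hl
  have habs : x.natAbs - 1 = y.natAbs - 1 := by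
    have hxa := natAbs_signedExt l hx0
    rw [h, natAbs_signedExt l hy0, List.getD_eq_getElem _ _ (by omega : y.natAbs - 1 < l.length),
      List.getD_eq_getElem _ _ (by omega : x.natAbs - 1 < l.length)] at hxa
    refine ((mem_signedWords_iff.1 hl).nodup_iff.2 List.nodup_range').getElem_inj_iff
      (hi := by simp; omega) (hj := by simp; omega) |>.1 ?_
    rw [List.getElem_map, List.getElem_map]
    exact hxa.symm
  rcases Int.natAbs_eq_natAbs_iff.1 (show x.natAbs = y.natAbs by omega) with rfl | rfl
  · rfl
  · rw [signedExt_neg] at h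
    omega

noncomputable def permOfWord : Equiv.Perm (BSet n) :=
  Equiv.ofBijective (fun x => ⟨signedExt l x.1, signedExt_mem_Icc hl x.2⟩)
    (Finite.injective_iff_bijective.1 fun x y h =>
      Subtype.ext (signedExt_injOn hl x.2 y.2 (congrArg Subtype.val h)))

theorem val_permOfWord (x : BSet n) : (permOfWord hl x).1 = signedExt l x.1 := rfl

theorem isSigned_permOfWord : IsSigned (permOfWord hl) := fun x => by
  simp only [val_permOfWord, val_negB, signedExt_neg]

theorem wordB_permOfWord : wordB (permOfWord hl) = l := by
  have hlen := length_of_mem_signedWords hl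
  refine List.ext_getElem (by simp [wordB, hlen]) fun i h₁ h₂ => ?_
  simp only [wordB, List.getElem_ofFn, val_permOfWord, val_posB, signedExt]
  rw [Int.sign_eq_one_of_pos (by omega), one_mul, show ((i : ℤ) + 1).natAbs - 1 = i by omega,
    List.getD_eq_getElem _ _ h₂]

end OfWord

namespace IsSigned

variable {σ : Equiv.Perm (BSet n)} (hσ : IsSigned σ)
include hσ

theorem val_eq_zero_iff {x : BSet n} : (σ x).1 = 0 ↔ x.1 = 0 := by
  refine ⟨fun h => negB_eq_self_iff.1 (σ.injective (Subtype.ext ?_)), fun h => ?_⟩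
  · rw [hσ x, h, neg_zero]
  · have := hσ x
    rw [negB_eq_self_iff.2 h] at this
    omega

theorem natAbs_val_inj {x y : BSet n} (h : (σ x).1.natAbs = (σ y).1.natAbs) :
    x.1.natAbs = y.1.natAbs := by
  rcases Int.natAbs_eq_natAbs_iff.1 h with h | h
  · rw [σ.injective (Subtype.ext h)]
  · rw [← hσ y, ← Subtype.ext_iff, σ.injective.eq_iff] at h
    rw [h, negB, Int.natAbs_neg]

theorem wordB_mem_signedWords : wordB σ ∈ signedWords n := by
  rw [mem_signedWords_iff]
  have hnodup : ((wordB σ).map Int.natAbs).Nodup := by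
    rw [wordB, List.map_ofFn, List.nodup_ofFn]
    intro i j h
    have := hσ.natAbs_val_inj h
    simp only [val_posB] at this
    exact Fin.ext (by omega)
  refine (List.subperm_of_subset hnodup fun m hm => ?_).perm_of_length_le (by simp [wordB])
  obtain ⟨i, rfl⟩ : ∃ i, (σ (posB i)).1.natAbs = m := by simpa [wordB] using hm
  have h0 := (hσ.val_eq_zero_iff (x := posB i)).not.2 (by simp; omega)
  have := (σ (posB i)).2
  rw [mem_Icc] at this
  rw [List.mem_range'_1]
  omega

theorem val_apply (x : BSet n) : (σ x).1 = signedExt (wordB σ) x.1 := by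
  rcases lt_trichotomy x.1 0 with hx | hx | hx
  · obtain ⟨i, hi⟩ := exists_posB_eq (x := negB x) (by simpa)
    rw [← negB_negB x, ← hi, hσ, signedExt, val_negB, val_posB, Int.sign_neg,
      Int.sign_eq_one_of_pos (by omega), Int.natAbs_neg,
      show ((i : ℤ) + 1).natAbs - 1 = i by omega, getD_wordB, neg_one_mul]
  · simp [signedExt, hx, hσ.val_eq_zero_iff]
  · obtain ⟨i, rfl⟩ := exists_posB_eq hx
    rw [signedExt, val_posB, Int.sign_eq_one_of_pos (by omega), one_mul,
      show ((i : ℤ) + 1).natAbs - 1 = i by omega, getD_wordB]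

end IsSigned

theorem eulerianB_eq_card_filter (n k : ℕ) :
    eulerianB n k = ((signedWords n).filter (signedDesc · = k)).card := by
  rw [eulerianB, Fintype.card_subtype]
  refine card_bij' (fun σ _ => wordB σ) (fun l hl => permOfWord (mem_filter.1 hl).1)
    (fun σ hσ => ?_) (fun l hl => ?_) (fun σ hσ => ?_) (fun l hl => wordB_permOfWord _)
  · simp only [mem_filter, mem_univ, true_and] at hσ ⊢
    exact ⟨hσ.1.wordB_mem_signedWords, hσ.2⟩
  · simp only [mem_filter, mem_univ, true_and] at hl ⊢
    exact ⟨isSigned_permOfWord _, by rw [descB_eq_signedDesc_wordB, wordB_permOfWord, hl.2]⟩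
  · simp only [mem_filter, mem_univ, true_and] at hσ
    exact Equiv.ext fun x => Subtype.ext (hσ.1.val_apply x).symm

theorem polyB_eq_sum_signedWords (n : ℕ) (t : ℝ) :
    polyB n t = ∑ l ∈ signedWords n, t ^ signedDesc l := by
  rw [polyB, ← sum_fiberwise_of_maps_to (g := signedDesc) (t := range (n + 1))
    fun l hl => mem_range.2 (Nat.lt_succ_of_le (signedDesc_le hl))]
  refine sum_congr rfl fun k _ => ?_
  rw [eulerianB_eq_card_filter, sum_congr rfl fun l hl => by rw [(mem_filter.1 hl).2],
    sum_const, nsmul_eq_mul]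

end SignedPermutations

section GeneratingFunction

theorem hasSum_choose_sub_mul_geometric {𝕜 : Type*} [NormedField 𝕜] [CompleteSpace 𝕜] {t : 𝕜}
    (ht : ‖t‖ < 1) {n j : ℕ} (hj : j ≤ n) :
    HasSum (fun k : ℕ => ((k + n - j).choose n : 𝕜) * t ^ k) (t ^ j / (1 - t) ^ (n + 1)) := by
  have hvanish : ∀ k ∉ Set.range (· + j), ((k + n - j).choose n : 𝕜) * t ^ k = 0 := by
    intro k hk
    have hkj : k < j := by
      by_contra! h
      exact hk ⟨k - j, Nat.sub_add_cancel h⟩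
    rw [Nat.choose_eq_zero_of_lt (by omega), Nat.cast_zero, zero_mul]
  rw [← (add_left_injective j).hasSum_iff hvanish]
  have h := (hasSum_choose_mul_geometric_of_norm_lt_one n ht).mul_left (t ^ j)
  rw [mul_one_div] at h
  refine h.congr_fun fun m => ?_
  rw [Function.comp_apply, show m + j + n - j = m + n by omega, pow_add]
  ring

theorem hasSum_odd_pow_mul_geometric (n : ℕ) {t : ℝ} (ht : |t| < 1) :
    HasSum (fun k : ℕ => (2 * (k : ℝ) + 1) ^ n * t ^ k) (polyB n t / (1 - t) ^ (n + 1)) := by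
  rw [polyB_eq_sum_signedWords, sum_div]
  refine (hasSum_sum fun l hl =>
    hasSum_choose_sub_mul_geometric (by rwa [Real.norm_eq_abs]) (signedDesc_le hl)).congr_fun
      fun k => ?_
  rw [← sum_mul, ← Nat.cast_sum, sum_signedWords_choose]
  push_cast
  ring

end GeneratingFunction

theorem isProbabilityMeasure_sum_smul_dirac {α ι : Type*} [MeasurableSpace α] {w : ι → ℝ}
    (hw : ∀ i, 0 ≤ w i) (h : HasSum w 1) (x : ι → α) :
    IsProbabilityMeasure (Measure.sum fun i => ENNReal.ofReal (w i) • Measure.dirac (x i)) := by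
  constructor
  simp only [Measure.sum_apply _ MeasurableSet.univ, Measure.smul_apply, measure_univ,
    smul_eq_mul, mul_one]
  rw [← ENNReal.ofReal_tsum_of_nonneg hw h.summable, h.tsum_eq, ENNReal.ofReal_one]

theorem stmt3 (t : ℝ) (ht0 : 0 < t) (ht1 : t < 1) :
    IsProbabilityMeasure (muB_lt t) ∧
    (∀ n : ℕ, ∫ x, x ^ n ∂(muB_lt t) = polyB n t) ∧
    (∀ n : ℕ, ∑' k : ℕ, (1 - t) ^ (n + 1) * (2 * (k : ℝ) + 1) ^ n * t ^ k = polyB n t) := by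
  have h1t : 0 < 1 - t := sub_pos.2 ht1
  have hmoment (n : ℕ) :
      HasSum (fun k : ℕ => (1 - t) ^ (n + 1) * (2 * (k : ℝ) + 1) ^ n * t ^ k) (polyB n t) := by
    have h := (hasSum_odd_pow_mul_geometric n (abs_lt.2 ⟨by linarith, ht1⟩)).mul_left
      ((1 - t) ^ (n + 1))
    rw [mul_div_cancel₀ _ (pow_pos h1t _).ne'] at h
    simpa only [mul_assoc] using h
  have hweights : HasSum (fun k : ℕ => (1 - t) * t ^ k) 1 := by
    simpa [mul_inv_cancel₀ h1t.ne'] using (hasSum_geometric_of_lt_one ht0.le ht1).mul_left (1 - t)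
  refine ⟨isProbabilityMeasure_sum_smul_dirac (fun k => by positivity) hweights _,
    fun n => ?_, fun n => (hmoment n).tsum_eq⟩
  rw [muB_lt, integral_sum_dirac fun _ => ENNReal.ofReal_ne_top, ← (hmoment n).tsum_eq]
  refine tsum_congr fun k => ?_
  rw [ENNReal.toReal_ofReal (by positivity), smul_eq_mul, mul_pow]
  ring
end

section
/- For 0 ≤ k ≤ n: if n is even then D(n,k) = D(n,n−k) and D̃(n,k) = D̃(n,n−k), while if n is odd then D(n,k) = D̃(n,n−k) and D̃(n,k) = D(n,n−k). -/
open MeasureTheory Finset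

/-!
Negating all values, `σ ↦ -σ`, is an involution of the signed permutations. Since the entries
of `(0, σ(1), …, σ(n))` are pairwise distinct, it exchanges descents and ascents, so
`desc(-σ) = n - desc(σ)`; since no `σ(i)` with `i ≥ 1` is `0`, the number of negative entries
likewise goes to its complement in `n`, keeping its parity for even `n` and swapping it for odd `n`.
-/

theorem descCount_map_add_descCount {α β : Type*} [LinearOrder α] [LinearOrder β] {f : α → β}
    (hf : StrictAnti f) :
    ∀ l : List α, l.IsChain (· ≠ ·) → descCount (l.map f) + descCount l = l.length - 1
  | [], _ | [_], _ => rfl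
  | a :: b :: rest, h => by
    rw [List.isChain_cons_cons] at h
    have ih := descCount_map_add_descCount hf (b :: rest) h.2
    simp only [List.map_cons, descCount, List.length_cons] at ih ⊢
    rcases h.1.lt_or_gt with hab | hab
    · rw [if_pos (hf hab), if_neg hab.not_gt]; omega
    · rw [if_neg (hf hab).not_gt, if_pos hab]; omega

section SignedPerm

variable {n : ℕ}

theorem negB_involutive : Function.Involutive (negB : BSet n → BSet n) :=
  fun x => Subtype.ext (neg_neg x.1)

def negPerm (n : ℕ) : Equiv.Perm (BSet n) := negB_involutive.toPerm _

@[simp]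
theorem negPerm_apply_val (x : BSet n) : (negPerm n x).1 = -x.1 := rfl

theorem isSigned_negPerm_mul_iff {σ : Equiv.Perm (BSet n)} :
    IsSigned (negPerm n * σ) ↔ IsSigned σ :=
  forall_congr' fun _ => by simp [neg_eq_iff_eq_neg]

theorem IsSigned.apply_posB_ne_zero {σ : Equiv.Perm (BSet n)} (hσ : IsSigned σ) (i : Fin n) :
    (σ (posB i)).1 ≠ 0 := by
  intro h
  have hneg : σ (negB (posB i)) = σ (posB i) := Subtype.ext (by rw [hσ, h, neg_zero])
  have := congrArg Subtype.val (σ.injective hneg)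
  simp only [negB, posB] at this
  omega

theorem IsSigned.descB_negPerm_mul_add {σ : Equiv.Perm (BSet n)} (hσ : IsSigned σ) :
    descB (negPerm n * σ) + descB σ = n := by
  have hinj : Function.Injective fun i : Fin n => (σ (posB i)).1 := fun i j hij => by
    have := congrArg Subtype.val (σ.injective (Subtype.ext hij))
    simp only [posB, add_left_inj, Nat.cast_inj] at this
    exact Fin.ext this
  have hchain : ((0 : ℤ) :: List.ofFn fun i : Fin n => (σ (posB i)).1).IsChain (· ≠ ·) := by
    refine (List.Pairwise.cons ?_ (List.nodup_ofFn.mpr hinj)).isChain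
    simp only [List.mem_ofFn]
    rintro _ ⟨i, rfl⟩
    exact (hσ.apply_posB_ne_zero i).symm
  simpa [descB, List.map_ofFn, Function.comp_def] using
    descCount_map_add_descCount (fun _ _ => neg_lt_neg) _ hchain

theorem IsSigned.negCount_negPerm_mul_add {σ : Equiv.Perm (BSet n)} (hσ : IsSigned σ) :
    negCount (negPerm n * σ) + negCount σ = n := by
  have hfilter : (univ.filter fun i : Fin n => ((negPerm n * σ) (posB i)).1 < 0)
      = univ.filter fun i : Fin n => ¬ (σ (posB i)).1 < 0 :=
    filter_congr fun i _ => by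
      have := hσ.apply_posB_ne_zero i
      simp only [Equiv.Perm.mul_apply, negPerm_apply_val]
      omega
  rw [negCount, negCount, hfilter, add_comm, card_filter_add_card_filter_not, card_univ,
    Fintype.card_fin]

theorem card_signed_descB_eq_card_signed_descB_sub {k : ℕ} (hk : k ≤ n) (P Q : ℕ → Prop)
    [DecidablePred P] [DecidablePred Q]
    (hPQ : ∀ a b, a + b = n → (P b ↔ Q a)) :
    Fintype.card {σ : Equiv.Perm (BSet n) // (IsSigned σ ∧ P (negCount σ)) ∧ descB σ = k} =
      Fintype.card {σ : Equiv.Perm (BSet n) //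
        (IsSigned σ ∧ Q (negCount σ)) ∧ descB σ = n - k} := by
  refine Fintype.card_congr (Equiv.subtypeEquiv (Equiv.mulLeft (negPerm n)) fun σ => ?_)
  simp only [Equiv.coe_mulLeft, isSigned_negPerm_mul_iff]
  constructor
  · rintro ⟨⟨hσ, hP⟩, hd⟩
    have := hσ.descB_negPerm_mul_add
    exact ⟨⟨hσ, (hPQ _ _ hσ.negCount_negPerm_mul_add).mp hP⟩, by omega⟩
  · rintro ⟨⟨hσ, hQ⟩, hd⟩
    have := hσ.descB_negPerm_mul_add
    exact ⟨⟨hσ, (hPQ _ _ hσ.negCount_negPerm_mul_add).mpr hQ⟩, by omega⟩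

end SignedPerm

theorem stmt5 (n k : ℕ) (hk : k ≤ n) :
    (Even n → eulerianD n k = eulerianD n (n - k) ∧ eulerianDt n k = eulerianDt n (n - k)) ∧
    (Odd n → eulerianD n k = eulerianDt n (n - k) ∧ eulerianDt n k = eulerianD n (n - k)) := by
  refine ⟨fun hn => ?_, fun hn => ?_⟩
  · have hpar : ∀ a b, a + b = n → (Even b ↔ Even a) := fun a b hab => by
      rw [← hab, Nat.even_add] at hn
      exact hn.symm
    exact ⟨card_signed_descB_eq_card_signed_descB_sub hk _ _ hpar,
      card_signed_descB_eq_card_signed_descB_sub hk _ _ fun a b hab => not_congr (hpar a b hab)⟩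
  · have hpar : ∀ a b, a + b = n → (Even b ↔ ¬ Even a) := fun a b hab => by
      rw [← hab, Nat.odd_add, ← Nat.not_even_iff_odd] at hn
      exact hn.symm
    exact ⟨card_signed_descB_eq_card_signed_descB_sub hk _ _ hpar,
      card_signed_descB_eq_card_signed_descB_sub hk (¬ Even ·) Even fun a b hab =>
        (hpar b a (by omega)).symm⟩
end

section
/- The numbers D̃(n,k) satisfy the recurrence D̃(n,k) = (k+1)·D̃(n−1,k) + (n−k)·D̃(n−1,k−1) + k·D(n−1,k) + (n−k+1)·D(n−1,k−1) for all 0 < k < n, together with the boundary conditions D̃(n,0) = 0 for all n ≥ 0 and D̃(n,n) = 0 if n is even, D̃(n,n) = 1 if n is odd. -/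
open MeasureTheory Finset

/-!
Encode a signed permutation `w` by its window `(w(1), …, w(n))`, a signed arrangement of
`1, …, n`. Every window of length `n + 1` arises exactly once by inserting the entry `n + 1` or
`-(n + 1)` into a window of length `n` at one of `n + 1` positions. If `(0, w(1), …, w(n))` has
`d` descents, inserting `n + 1` keeps `d` in the `d + 1` slots right after a descent top or at
the end, and raises it by one in the other slots; inserting `-(n + 1)` keeps `d` in the `d` slots
right after a descent top only, and changes the parity of the number of negative entries.
Summing over windows gives a recurrence valid for any condition on the number of negative
entries; at `k = 0` and `k = n + 1` it collapses to `D̃(n + 1, 0) = D̃(n, 0)` and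
`D̃(n + 1, n + 1) = D(n, n)`, which give the boundary values.
-/

theorem List.ofFn_insertNth {α : Type*} {n : ℕ} (j : Fin (n + 1)) (x : α) (v : Fin n → α) :
    List.ofFn (j.insertNth x v) = (List.ofFn v).insertIdx j x := by
  induction n with
  | zero =>
    rw [Fin.fin_one_eq_zero j, Fin.insertNth_zero']
    simp
  | succ n ih =>
    cases j using Fin.cases with
    | zero => simp [Fin.insertNth_zero']
    | succ j =>
      rw [← Fin.cons_self_tail v, Fin.insertNth_succ_cons, List.ofFn_cons, List.ofFn_cons,
        Fin.val_succ, List.insertIdx_succ_cons, ih]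

theorem Fin.eq_of_insertNth_eq {α : Type*} {n : ℕ} {p q : Fin (n + 1)} {x y : α}
    {f g : Fin n → α} (h : (p.insertNth x f : Fin (n + 1) → α) = q.insertNth y g)
    (hx : ∀ i, g i ≠ x) : p = q := by
  by_contra hpq
  obtain ⟨i, rfl⟩ := Fin.exists_succAbove_eq hpq
  have := congrFun h (q.succAbove i)
  simp only [Fin.insertNth_apply_same, Fin.insertNth_apply_succAbove] at this
  exact hx i this.symm

theorem Finset.card_filter_eq_of_forall_eq_or_eq_succ {ι : Type*} (s : Finset ι) (f : ι → ℕ)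
    (d k : ℕ) (hf : ∀ i ∈ s, f i = d ∨ f i = d + 1) :
    #{i ∈ s | f i = k} = (if d = k then #{i ∈ s | f i = d} else 0) +
      (if d + 1 = k then #s - #{i ∈ s | f i = d} else 0) := by
  by_cases hd : d = k
  · subst hd
    simp
  by_cases hd' : d + 1 = k
  · subst hd'
    rw [if_neg hd, if_pos rfl, zero_add,
      ← Finset.card_filter_add_card_filter_not (s := s) (fun i => f i = d),
      Nat.add_sub_cancel_left]
    refine congrArg _ (Finset.filter_congr fun i hi => ?_)
    rcases hf i hi with h | h <;> simp [h]
  · rw [if_neg hd, if_neg hd', Finset.card_eq_zero, Finset.filter_eq_empty_iff]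
    intro i hi
    rcases hf i hi with h | h <;> omega

section descCount

variable {α : Type*} [LinearOrder α]

theorem descCount_insertIdx_succ_succ (a b x : α) (l : List α) (t : ℕ) :
    descCount ((a :: b :: l).insertIdx (t + 2) x) =
      (if b < a then 1 else 0) + descCount ((b :: l).insertIdx (t + 1) x) := rfl

theorem descCount_insertIdx_succ_eq_or (a x : α) (l : List α) (t : ℕ) :
    descCount ((a :: l).insertIdx (t + 1) x) = descCount (a :: l) ∨
      descCount ((a :: l).insertIdx (t + 1) x) = descCount (a :: l) + 1 := by
  induction l generalizing a t with
  | nil =>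
    cases t with
    | zero =>
      change (if x < a then 1 else 0) + 0 = 0 ∨ (if x < a then 1 else 0) + 0 = 0 + 1
      split_ifs <;> simp
    | succ t => simp
  | cons b l ih =>
    cases t with
    | zero =>
      change descCount (a :: x :: b :: l) = descCount (a :: b :: l) ∨
        descCount (a :: x :: b :: l) = descCount (a :: b :: l) + 1
      simp only [descCount_cons_cons]
      split_ifs <;> first | omega | (exfalso; order)
    | succ t =>
      rw [descCount_insertIdx_succ_succ, descCount_cons_cons]
      rcases ih b t with h | h <;> omega

/-- For `x` above or below every entry, the slots keeping the descent number are those right after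
a descent top, together with the last slot when `x` is not below the last entry. -/
theorem card_descCount_insertIdx_eq (a x : α) (l : List α)
    (hx : (∀ b ∈ a :: l, b < x) ∨ ∀ b ∈ a :: l, x < b) :
    #{t ∈ Finset.range (l.length + 1) |
        descCount ((a :: l).insertIdx (t + 1) x) = descCount (a :: l)} =
      descCount (a :: l) + if x < (a :: l).getLast (List.cons_ne_nil a l) then 0 else 1 := by
  induction l generalizing a with
  | nil =>
    rcases hx with hx | hx <;> simp at hx <;>
      simp [hx, Finset.filter_singleton, descCount, not_lt_of_gt hx]
  | cons b l ih =>
    have hx' : (∀ c ∈ b :: l, c < x) ∨ ∀ c ∈ b :: l, x < c := by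
      rcases hx with hx | hx
      exacts [.inl fun c hc => hx c (List.mem_cons_of_mem a hc),
        .inr fun c hc => hx c (List.mem_cons_of_mem a hc)]
    have head : descCount ((a :: b :: l).insertIdx (0 + 1) x) = descCount (a :: b :: l) ↔
        b < a := by
      change descCount (a :: x :: b :: l) = _ ↔ _
      simp only [descCount_cons_cons]
      rcases hx with hx | hx
      · rw [if_neg (not_lt.2 (hx a (by simp)).le), if_pos (hx b (by simp))]
        by_cases hba : b < a <;> simp [hba]
      · rw [if_pos (hx a (by simp)), if_neg (not_lt.2 (hx b (by simp)).le)]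
        by_cases hba : b < a <;> simp [hba]
    have tail (t : ℕ) :
        descCount ((a :: b :: l).insertIdx (t + 1 + 1) x) = descCount (a :: b :: l) ↔
          descCount ((b :: l).insertIdx (t + 1) x) = descCount (b :: l) := by
      rw [descCount_insertIdx_succ_succ, descCount_cons_cons]
      omega
    rw [List.length_cons, Finset.card_filter, Finset.sum_range_succ']
    simp only [tail, head, ← Finset.card_filter]
    rw [ih b hx', List.getLast_cons_cons, descCount_cons_cons]
    split_ifs <;> omega

theorem card_descCount_insertIdx_eq_of_forall_lt (a x : α) (l : List α)
    (hx : ∀ b ∈ a :: l, b < x) :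
    #{t ∈ Finset.range (l.length + 1) |
        descCount ((a :: l).insertIdx (t + 1) x) = descCount (a :: l)} =
      descCount (a :: l) + 1 := by
  rw [card_descCount_insertIdx_eq a x l (.inl hx),
    if_neg (not_lt.2 (hx _ (List.getLast_mem _)).le)]

theorem card_descCount_insertIdx_eq_of_forall_gt (a x : α) (l : List α)
    (hx : ∀ b ∈ a :: l, x < b) :
    #{t ∈ Finset.range (l.length + 1) |
        descCount ((a :: l).insertIdx (t + 1) x) = descCount (a :: l)} =
      descCount (a :: l) := by
  rw [card_descCount_insertIdx_eq a x l (.inr hx), if_pos (hx _ (List.getLast_mem _)),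
    add_zero]

end descCount

abbrev SignedPerm (n : ℕ) : Type := Equiv.Perm (Fin n) × (Fin n → Bool)

namespace SignedPerm

variable {n : ℕ}

def window (w : SignedPerm n) (i : Fin n) : ℤ :=
  if w.2 i then ((w.1 i : ℕ) : ℤ) + 1 else -(((w.1 i : ℕ) : ℤ) + 1)

def desc (w : SignedPerm n) : ℕ := descCount ((0 : ℤ) :: List.ofFn w.window)

def negCount (w : SignedPerm n) : ℕ := #{i | w.window i < 0}

theorem natAbs_window (w : SignedPerm n) (i : Fin n) : (w.window i).natAbs = w.1 i + 1 := by
  unfold window; split_ifs <;> omega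

theorem natAbs_window_le (w : SignedPerm n) (i : Fin n) : (w.window i).natAbs ≤ n := by
  rw [natAbs_window]; exact (w.1 i).isLt

theorem window_pos_iff (w : SignedPerm n) (i : Fin n) : 0 < w.window i ↔ w.2 i = true := by
  unfold window; split_ifs with h <;> simp [h]

theorem window_injective : Function.Injective (window : SignedPerm n → Fin n → ℤ) := by
  intro w w' h
  have hπ : w.1 = w'.1 := Equiv.ext fun i => Fin.ext <| by
    have := congrArg Int.natAbs (congrFun h i)
    rw [natAbs_window, natAbs_window] at this
    omega
  have hs : w.2 = w'.2 := funext fun i => by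
    refine Bool.eq_iff_iff.mpr <| (window_pos_iff w i).symm.trans ?_
    rw [h]; exact window_pos_iff w' i
  exact Prod.ext hπ hs

theorem desc_le (w : SignedPerm n) : w.desc ≤ n := by
  simpa [desc] using descCount_cons_le_length (0 : ℤ) (List.ofFn w.window)

theorem natAbs_le_of_mem (w : SignedPerm n) {c : ℤ} (hc : c ∈ (0 : ℤ) :: List.ofFn w.window) :
    c.natAbs ≤ n := by
  rcases List.mem_cons.1 hc with rfl | hc
  · simp
  · obtain ⟨i, rfl⟩ := List.mem_ofFn.1 hc
    exact w.natAbs_window_le i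

end SignedPerm

namespace BSet

variable {n : ℕ}

def zero : BSet n := ⟨0, by simp⟩

def ofOption : Option (Fin n × Bool) → BSet n
  | none => zero
  | some (i, true) => posB i
  | some (i, false) => negB (posB i)

theorem ofOption_injective : Function.Injective (ofOption (n := n)) := by
  rintro (_ | ⟨i, _ | _⟩) (_ | ⟨j, _ | _⟩) h <;>
    simp only [ofOption, zero, posB, negB, Subtype.mk.injEq] at h <;> simp [Fin.ext_iff] <;> omega

theorem card_eq_card_option : Fintype.card (BSet n) = Fintype.card (Option (Fin n × Bool)) := by
  simp only [Fintype.card_coe, Int.card_Icc, Fintype.card_option, Fintype.card_prod,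
    Fintype.card_fin, Fintype.card_bool]
  omega

noncomputable def optionEquiv : Option (Fin n × Bool) ≃ BSet n :=
  Equiv.ofBijective ofOption <|
    (Fintype.bijective_iff_injective_and_card _).2
      ⟨ofOption_injective, card_eq_card_option.symm⟩

theorem optionEquiv_apply (o : Option (Fin n × Bool)) : optionEquiv o = ofOption o := rfl

theorem negB_ofOption (o : Option (Fin n × Bool)) :
    negB (ofOption o) = ofOption (o.map (Prod.map id not)) := by
  rcases o with _ | ⟨i, _ | _⟩ <;> ext <;> simp [ofOption, zero, negB]

end BSet

namespace SignedPerm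

variable {n : ℕ}

/-- `w` acting on `{-n, …, n}` transported along `BSet.ofOption`. -/
def optionPerm (w : SignedPerm n) : Equiv.Perm (Option (Fin n × Bool)) :=
  Equiv.optionCongr <|
    Equiv.prodShear w.1 fun i => if w.2 i then Equiv.refl Bool else Equiv.boolNot

noncomputable def toPerm (w : SignedPerm n) : Equiv.Perm (BSet n) :=
  BSet.optionEquiv.permCongr w.optionPerm

theorem toPerm_ofOption (w : SignedPerm n) (o : Option (Fin n × Bool)) :
    w.toPerm (BSet.ofOption o) = BSet.ofOption (w.optionPerm o) := by
  rw [← BSet.optionEquiv_apply, ← BSet.optionEquiv_apply, toPerm, Equiv.permCongr_apply,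
    Equiv.symm_apply_apply]

theorem toPerm_posB (w : SignedPerm n) (i : Fin n) : (w.toPerm (posB i)).1 = w.window i := by
  rw [show posB i = BSet.ofOption (some (i, true)) from rfl, toPerm_ofOption]
  unfold optionPerm window
  cases h : w.2 i <;> simp [h, BSet.ofOption, posB, negB]

theorem isSigned_toPerm (w : SignedPerm n) : IsSigned w.toPerm := by
  intro x
  obtain ⟨o, rfl⟩ := BSet.optionEquiv.surjective x
  rw [BSet.optionEquiv_apply, BSet.negB_ofOption, toPerm_ofOption, toPerm_ofOption]
  rcases o with _ | ⟨i, b⟩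
  · simp [optionPerm, BSet.ofOption, BSet.zero]
  · cases h : w.2 i <;> cases b <;> simp [optionPerm, h, BSet.ofOption, posB, negB]

end SignedPerm

namespace IsSigned

variable {n : ℕ} {σ τ : Equiv.Perm (BSet n)}

theorem apply_zero (hσ : IsSigned σ) : σ BSet.zero = BSet.zero := by
  have h := hσ BSet.zero
  rw [show negB (BSet.zero (n := n)) = BSet.zero from Subtype.ext (neg_zero (G := ℤ))] at h
  apply Subtype.ext
  simp only [BSet.zero] at h ⊢
  omega

theorem ext (hσ : IsSigned σ) (hτ : IsSigned τ)
    (h : ∀ i, (σ (posB i)).1 = (τ (posB i)).1) : σ = τ := by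
  ext x
  obtain ⟨o, rfl⟩ := BSet.optionEquiv.surjective x
  rcases o with _ | ⟨i, _ | _⟩
  · rw [BSet.optionEquiv_apply, BSet.ofOption, hσ.apply_zero, hτ.apply_zero]
  · change (σ (negB (posB i))).1 = (τ (negB (posB i))).1
    rw [hσ, hτ, h]
  · exact h i

theorem exists_toPerm_eq (hσ : IsSigned σ) : ∃ w : SignedPerm n, w.toPerm = σ := by
  have ne_zero (i : Fin n) : (σ (posB i)).1 ≠ 0 := by
    intro h
    have := congrArg Subtype.val <| σ.injective <| (hσ.apply_zero).trans (Subtype.ext h.symm)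
    simp [posB, BSet.zero] at this
    omega
  have natAbs_le (i : Fin n) : (σ (posB i)).1.natAbs ≤ n := by
    have := (σ (posB i)).2
    simp only [Finset.mem_Icc] at this
    omega
  have natAbs_inj (i j : Fin n) (h : (σ (posB i)).1.natAbs = (σ (posB j)).1.natAbs) : i = j := by
    rcases Int.natAbs_eq_natAbs_iff.1 h with h | h
    · have := congrArg Subtype.val (σ.injective (Subtype.ext h))
      simp only [posB] at this
      exact Fin.ext (by omega)
    · rw [← hσ] at h
      have := congrArg Subtype.val (σ.injective (Subtype.ext h))
      simp only [posB, negB] at this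
      omega
  let π : Equiv.Perm (Fin n) :=
    Equiv.ofBijective
      (fun i => ⟨(σ (posB i)).1.natAbs - 1, by have := natAbs_le i; have := ne_zero i; omega⟩)
      (Finite.injective_iff_bijective.1 fun i j h => natAbs_inj i j <| by
        have := ne_zero i; have := ne_zero j
        simp only [Fin.ext_iff] at h
        omega)
  refine ⟨(π, fun i => decide (0 < (σ (posB i)).1)),
    (SignedPerm.isSigned_toPerm _).ext hσ fun i => ?_⟩
  rw [SignedPerm.toPerm_posB, SignedPerm.window]
  have := ne_zero i
  by_cases h : 0 < (σ (posB i)).1 <;> simp [π, h] <;> omega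

end IsSigned

namespace SignedPerm

variable {n : ℕ}

theorem toPerm_injective : Function.Injective (toPerm : SignedPerm n → Equiv.Perm (BSet n)) :=
  fun w w' h => window_injective <| funext fun i => by rw [← toPerm_posB, h, toPerm_posB]

theorem negCount_toPerm (w : SignedPerm n) : _root_.negCount w.toPerm = w.negCount := by
  simp only [_root_.negCount, SignedPerm.negCount, toPerm_posB]

theorem descB_toPerm (w : SignedPerm n) : descB w.toPerm = w.desc := by
  simp only [descB, desc, toPerm_posB]

theorem card_isSigned_filter (P : ℕ → Prop) [DecidablePred P] (k : ℕ) :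
    Fintype.card
        {σ : Equiv.Perm (BSet n) // (IsSigned σ ∧ P (_root_.negCount σ)) ∧ descB σ = k} =
      #{w : SignedPerm n | P w.negCount ∧ w.desc = k} := by
  rw [Fintype.card_subtype]
  symm
  refine Finset.card_nbij toPerm (fun w hw => ?_) toPerm_injective.injOn fun σ hσ => ?_
  · simp only [Finset.coe_filter, Finset.mem_univ, true_and, Set.mem_ofPred_eq] at hw ⊢
    rw [negCount_toPerm, descB_toPerm]
    exact ⟨⟨isSigned_toPerm w, hw.1⟩, hw.2⟩
  · simp only [Finset.coe_filter, Finset.mem_univ, true_and, Set.mem_ofPred_eq] at hσ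
    obtain ⟨w, rfl⟩ := hσ.1.1.exists_toPerm_eq
    rw [negCount_toPerm, descB_toPerm] at hσ
    exact ⟨w, by simpa using ⟨hσ.1.2, hσ.2⟩, rfl⟩

/-- Inserts the entry `n + 1` (if `b`) or `-(n + 1)` at position `j` of the window. -/
def insertNth (w : SignedPerm n) (j : Fin (n + 1)) (b : Bool) : SignedPerm (n + 1) :=
  ((finSuccEquiv' j).trans ((Equiv.optionCongr w.1).trans (finSuccEquiv' (Fin.last n)).symm),
    j.insertNth b w.2)

theorem window_insertNth (w : SignedPerm n) (j : Fin (n + 1)) (b : Bool) :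
    (w.insertNth j b).window =
      j.insertNth (if b then (n : ℤ) + 1 else -((n : ℤ) + 1)) w.window := by
  funext i
  cases i using Fin.succAboveCases j with
  | x => simp [window, insertNth, finSuccEquiv'_at]
  | p i => simp [window, insertNth, finSuccEquiv'_succAbove]

theorem negCount_insertNth (w : SignedPerm n) (j : Fin (n + 1)) (b : Bool) :
    (w.insertNth j b).negCount = w.negCount + if b then 0 else 1 := by
  rw [negCount, negCount, window_insertNth, Finset.card_filter, Finset.card_filter,
    Fin.sum_univ_succAbove _ j]
  have top_neg : (if b then (n : ℤ) + 1 else -((n : ℤ) + 1)) < 0 ↔ b = false := by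
    cases b <;> simp <;> omega
  simp only [Fin.insertNth_apply_same, Fin.insertNth_apply_succAbove, top_neg]
  cases b <;> simp [add_comm]

theorem desc_insertNth (w : SignedPerm n) (j : Fin (n + 1)) (b : Bool) :
    (w.insertNth j b).desc = descCount (((0 : ℤ) :: List.ofFn w.window).insertIdx (j + 1)
      (if b then (n : ℤ) + 1 else -((n : ℤ) + 1))) := by
  rw [desc, window_insertNth, List.ofFn_insertNth, List.insertIdx_succ_cons]

theorem insertNth_bijective :
    Function.Bijective
      fun p : SignedPerm n × Fin (n + 1) × Bool => p.1.insertNth p.2.1 p.2.2 := by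
  refine (Fintype.bijective_iff_injective_and_card _).2 ⟨?_, ?_⟩
  · rintro ⟨w, j, b⟩ ⟨w', j', b'⟩ h
    have h := congrArg window h
    simp only [window_insertNth] at h
    obtain rfl := Fin.eq_of_insertNth_eq h fun i hi => by
      have := congrArg Int.natAbs hi
      have := w'.natAbs_window_le i
      cases b <;> simp only [Bool.false_eq_true, if_true, if_false] at * <;> omega
    obtain ⟨hb, hw⟩ := Fin.insertNth_inj.1 h
    obtain rfl : b = b' := by cases b <;> cases b' <;> first | rfl | (simp at hb; omega)
    rw [window_injective hw]
  · simp only [Fintype.card_prod, Fintype.card_perm, Fintype.card_fun, Fintype.card_fin,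
      Fintype.card_bool, Nat.factorial_succ, pow_succ]
    ring

theorem card_desc_insertNth (w : SignedPerm n) (b : Bool) (k : ℕ) :
    #{j | (w.insertNth j b).desc = k} =
      (if w.desc = k then w.desc + b.toNat else 0) +
        (if w.desc + 1 = k then n + 1 - (w.desc + b.toNat) else 0) := by
  set x : ℤ := if b then (n : ℤ) + 1 else -((n : ℤ) + 1) with hx
  set l := (0 : ℤ) :: List.ofFn w.window
  have card_eq (k : ℕ) : #{j | (w.insertNth j b).desc = k} =
      #{t ∈ Finset.range (n + 1) | descCount (l.insertIdx (t + 1) x) = k} := by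
    rw [Finset.card_filter, Finset.card_filter, ← Fin.sum_univ_eq_sum_range]
    simp only [desc_insertNth]
    rfl
  have unchanged : #{t ∈ Finset.range (n + 1) | descCount (l.insertIdx (t + 1) x) = w.desc} =
      w.desc + b.toNat := by
    have hlen : (List.ofFn w.window).length = n := List.length_ofFn
    cases b
    · have h := card_descCount_insertIdx_eq_of_forall_gt 0 x _ fun c hc => by
        have := w.natAbs_le_of_mem hc; simp [hx]; omega
      rw [hlen] at h
      exact h
    · have h := card_descCount_insertIdx_eq_of_forall_lt 0 x _ fun c hc => by
        have := w.natAbs_le_of_mem hc; simp [hx]; omega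
      rw [hlen] at h
      exact h
  rw [card_eq, Finset.card_filter_eq_of_forall_eq_or_eq_succ _ _ w.desc k
    fun t _ => descCount_insertIdx_succ_eq_or 0 x _ t, unchanged, Finset.card_range]

theorem card_filter_succ (P : ℕ → Prop) [DecidablePred P] (m k : ℕ) :
    #{w : SignedPerm (m + 1) | P w.negCount ∧ w.desc = k} =
      (k + 1) * #{w : SignedPerm m | P w.negCount ∧ w.desc = k} +
        (m + 1 - k) * #{w : SignedPerm m | P w.negCount ∧ w.desc + 1 = k} +
        k * #{w : SignedPerm m | P (w.negCount + 1) ∧ w.desc = k} +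
        (m + 2 - k) * #{w : SignedPerm m | P (w.negCount + 1) ∧ w.desc + 1 = k} := by
  have per_w (w : SignedPerm m) :
      ∑ jb : Fin (m + 1) × Bool,
          (if P (w.insertNth jb.1 jb.2).negCount ∧ (w.insertNth jb.1 jb.2).desc = k then 1
            else 0) =
        (k + 1) * (if P w.negCount ∧ w.desc = k then 1 else 0) +
          (m + 1 - k) * (if P w.negCount ∧ w.desc + 1 = k then 1 else 0) +
          k * (if P (w.negCount + 1) ∧ w.desc = k then 1 else 0) +
          (m + 2 - k) * (if P (w.negCount + 1) ∧ w.desc + 1 = k then 1 else 0) := by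
    have fixed_sign (b : Bool) : ∑ j : Fin (m + 1),
        (if P (w.insertNth j b).negCount ∧ (w.insertNth j b).desc = k then 1 else 0) =
          if P (w.negCount + if b then 0 else 1) then #{j | (w.insertNth j b).desc = k}
          else 0 := by
      simp only [negCount_insertNth]
      by_cases hP : P (w.negCount + if b then 0 else 1)
      · simp only [hP, true_and, if_true, Finset.sum_boole, Nat.cast_id]
      · simp only [hP, false_and, if_false, Finset.sum_const_zero]
    rw [Fintype.sum_prod_type, Finset.sum_comm, Fintype.sum_bool, fixed_sign, fixed_sign,
      card_desc_insertNth, card_desc_insertNth]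
    have := w.desc_le
    by_cases h0 : P w.negCount <;> by_cases h1 : P (w.negCount + 1) <;>
      by_cases hk : w.desc = k <;> by_cases hk' : w.desc + 1 = k <;>
      simp [h0, h1, hk, hk'] <;> omega
  have lhs : #{w : SignedPerm (m + 1) | P w.negCount ∧ w.desc = k} =
      #{p : SignedPerm m × Fin (m + 1) × Bool |
        P (p.1.insertNth p.2.1 p.2.2).negCount ∧ (p.1.insertNth p.2.1 p.2.2).desc = k} :=
    (Finset.card_bijective _ insertNth_bijective fun _ => by simp).symm
  rw [lhs, Finset.card_filter, Fintype.sum_prod_type]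
  simp only [per_w, Finset.sum_add_distrib, ← Finset.mul_sum, Finset.sum_boole, Nat.cast_id]

section

variable (P : ℕ → Prop) [DecidablePred P]

theorem card_filter_zero :
    #{w : SignedPerm 0 | P w.negCount ∧ w.desc = 0} = if P 0 then 1 else 0 := by
  have (w : SignedPerm 0) : w.negCount = 0 ∧ w.desc = 0 := ⟨by simp [negCount], rfl⟩
  split_ifs with h <;> simp [this, h]

theorem card_filter_desc_zero (n : ℕ) :
    #{w : SignedPerm n | P w.negCount ∧ w.desc = 0} = if P 0 then 1 else 0 := by
  induction n with
  | zero => exact card_filter_zero P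
  | succ m ih => simp [card_filter_succ, ih]

theorem card_filter_desc_self (n : ℕ) :
    #{w : SignedPerm n | P w.negCount ∧ w.desc = n} = if P n then 1 else 0 := by
  induction n generalizing P with
  | zero => exact card_filter_zero P
  | succ m ih =>
    have h := ih (fun c => P (c + 1))
    have (w : SignedPerm m) : w.desc ≠ m + 1 := by have := w.desc_le; omega
    simp [card_filter_succ, this, h]

end

end SignedPerm

theorem stmt7 :
    (∀ n k : ℕ, 0 < k → k < n →
      eulerianDt n k = (k + 1) * eulerianDt (n - 1) k + (n - k) * eulerianDt (n - 1) (k - 1)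
        + k * eulerianD (n - 1) k + (n - k + 1) * eulerianD (n - 1) (k - 1)) ∧
    (∀ n : ℕ, eulerianDt n 0 = 0) ∧
    (∀ n : ℕ, Even n → eulerianDt n n = 0) ∧
    (∀ n : ℕ, Odd n → eulerianDt n n = 1) := by
  have hDt (n k : ℕ) : eulerianDt n k = #{w : SignedPerm n | ¬Even w.negCount ∧ w.desc = k} :=
    SignedPerm.card_isSigned_filter (fun c => ¬Even c) k
  have hD (n k : ℕ) : eulerianD n k = #{w : SignedPerm n | Even w.negCount ∧ w.desc = k} :=
    SignedPerm.card_isSigned_filter (fun c => Even c) k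
  refine ⟨fun n k hk hkn => ?_, fun n => ?_, fun n hn => ?_, fun n hn => ?_⟩
  · obtain ⟨m, rfl⟩ : ∃ m, n = m + 1 := ⟨n - 1, by omega⟩
    obtain ⟨k, rfl⟩ : ∃ k', k = k' + 1 := ⟨k - 1, by omega⟩
    rw [hDt, SignedPerm.card_filter_succ (fun c => ¬Even c),
      show m + 1 - (k + 1) + 1 = m + 2 - (k + 1) by omega]
    simp only [Nat.even_add_one, not_not, Nat.add_right_cancel_iff, Nat.add_sub_cancel, hDt, hD]
  · rw [hDt, SignedPerm.card_filter_desc_zero (fun c => ¬Even c)]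
    simp
  · rw [hDt, SignedPerm.card_filter_desc_self (fun c => ¬Even c)]
    simp [hn]
  · rw [hDt, SignedPerm.card_filter_desc_self (fun c => ¬Even c)]
    simp [Nat.not_even_iff_odd.2 hn]
end

section
/- The numbers D(n,k) satisfy the self-contained recurrence: D(n,0) = 1, D(n,n) = (1 + (−1)^n)/2, and for 0 < k < n (as an identity of integers), D(n,k) = (2k+1)·D(n−1,k) + (2n−2k+1)·D(n−1,k−1) + (−1)^k·C(n−1,k−1), where C denotes the binomial coefficient. -/
open MeasureTheory Finset

/-!
Encode a signed permutation by its window `(σ(1), …, σ(n))`, a word whose absolute values are a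
permutation of `1, …, n`. Each such word of length `n + 1` arises in exactly one way by inserting
`n + 1` or `-(n + 1)` into one of the `n + 1` slots of a word of length `n`. Being larger (smaller)
than `0` and every entry, the inserted letter leaves the number of descents of `(0, w)` unchanged
in a descent slot and raises it by one in every other interior slot; at the end `n + 1` adds no
descent and `-(n + 1)` adds one.

Weighting a word by `s ^ (number of negative entries)` and writing `W(n, k, s)` for the weighted
number of words with `k` descents, this gives
`W(n+1, k, s) = (k + 1 + s k) W(n, k, s) + (n - k + 1 + s (n - k + 2)) W(n, k-1, s)`.
For `s = -1` it is Pascal's rule up to sign, so `W(n, k, -1) = (-1)^k C(n, k)`, while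
`2 D(n, k) = W(n, k, 1) + W(n, k, -1)`; the recurrence for `D` is a linear combination of these.
-/

theorem IsSigned.val_apply_eq_zero_iff {n : ℕ} {σ : Equiv.Perm (BSet n)} (hσ : IsSigned σ)
    (x : BSet n) : (σ x).1 = 0 ↔ x.1 = 0 := by
  have hzero : (σ ⟨0, by simp⟩).1 = 0 := by
    have := hσ ⟨0, by simp⟩
    simp only [negB, neg_zero] at this
    omega
  constructor
  · intro hx
    exact congrArg Subtype.val (σ.injective (Subtype.ext (hx.trans hzero.symm)))
  · intro hx
    rwa [show x = ⟨0, by simp⟩ from Subtype.ext hx]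

theorem BSet.exists_eq_posB {n : ℕ} {x : BSet n} (hx : x.1 ≠ 0) :
    ∃ i : Fin n, x = posB i ∨ x = negB (posB i) := by
  have hb := Finset.mem_Icc.mp x.2
  refine ⟨⟨x.1.natAbs - 1, by omega⟩, ?_⟩
  rcases lt_or_gt_of_ne hx with hneg | hpos
  · exact Or.inr (Subtype.ext (by simp only [negB, posB]; omega))
  · exact Or.inl (Subtype.ext (by simp only [posB]; omega))

namespace EulerianD

section Descents

variable {α : Type*} [LinearOrder α]

theorem descCount_cons_cons (a b : α) (l : List α) :
    descCount (a :: b :: l) = (if b < a then 1 else 0) + descCount (b :: l) := rfl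

theorem descCount_cons_le_length (c : α) (l : List α) : descCount (c :: l) ≤ l.length := by
  induction l generalizing c with
  | nil => simp [descCount]
  | cons b t ih =>
    have := ih b
    simp only [descCount_cons_cons, List.length_cons]
    split <;> omega

theorem descCount_cons_append_singleton (c x : α) (l : List α) :
    descCount (c :: (l ++ [x])) = descCount (c :: l) + if x < l.getLastD c then 1 else 0 := by
  induction l generalizing c with
  | nil => simp [descCount, add_comm]
  | cons b t ih => simp only [List.cons_append, descCount_cons_cons, ih, List.getLastD_cons]; omega

/-- Slot `i < l.length` of `c :: l` is the gap just before `l[i]`; it is a descent slot when `l[i]`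
is smaller than its predecessor. (The default `d` of `getD` is never read.) -/
theorem card_descentSlots (d c : α) (l : List α) :
    #{i ∈ range l.length | l.getD i d < (c :: l).getD i d} = descCount (c :: l) := by
  induction l generalizing c with
  | nil => simp [descCount]
  | cons b t ih =>
    rw [card_filter, List.length_cons, sum_range_succ', descCount_cons_cons, ← ih b, card_filter]
    simp [add_comm]

-- An extreme letter `x` put between `a` and `b` makes exactly one of `(a, x)`, `(x, b)` a descent.
theorem descCount_cons_insertIdx_add {x : α} (d : α) :
    ∀ {i : ℕ} {l : List α} {c : α}, i < l.length →
      ((∀ y ∈ c :: l, y < x) ∨ ∀ y ∈ c :: l, x < y) →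
      descCount (c :: l.insertIdx i x) + (if l.getD i d < (c :: l).getD i d then 1 else 0) =
        descCount (c :: l) + 1
  | _, [], _, hi, _ => by simp at hi
  | 0, b :: t, c, _, hx => by
    simp only [List.insertIdx_zero, descCount_cons_cons, List.getD_cons_zero]
    rcases hx with hx | hx
    · have := hx c (by simp); have := hx b (by simp)
      simp [not_lt_of_gt ‹c < x›, ‹b < x›]; omega
    · have := hx c (by simp); have := hx b (by simp)
      simp [‹x < c›, not_lt_of_gt ‹x < b›]; omega
  | i + 1, b :: t, c, hi, hx => by
    have ih := descCount_cons_insertIdx_add d (i := i) (l := t) (c := b) (by simpa using hi)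
      (hx.imp (fun h y hy => h y (List.mem_cons_of_mem c hy))
        (fun h y hy => h y (List.mem_cons_of_mem c hy)))
    simp only [List.insertIdx_succ_cons, descCount_cons_cons, List.getD_cons_succ]
    omega

theorem card_filter_descCount_insertIdx {x : α} (c : α) (l : List α)
    (hx : (∀ y ∈ c :: l, y < x) ∨ ∀ y ∈ c :: l, x < y) (K : ℕ) :
    #{i ∈ range (l.length + 1) | descCount (c :: l.insertIdx i x) = K} =
      (if descCount (c :: (l ++ [x])) = K then 1 else 0)
        + (if descCount (c :: l) = K then descCount (c :: l) else 0)
        + (if descCount (c :: l) + 1 = K then l.length - descCount (c :: l) else 0) := by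
  set D := descCount (c :: l)
  have hslots := card_descentSlots x c l
  have hother := card_filter_add_card_filter_not
    (s := range l.length) (fun i => l.getD i x < (c :: l).getD i x)
  have hinterior : #{i ∈ range l.length | descCount (c :: l.insertIdx i x) = K} =
      #{i ∈ range l.length | (if l.getD i x < (c :: l).getD i x then D else D + 1) = K} := by
    refine congrArg card (filter_congr fun i hi => ?_)
    have := descCount_cons_insertIdx_add x (mem_range.mp hi) hx
    split_ifs at this ⊢ <;> omega
  rw [range_add_one, filter_insert, List.insertIdx_length_self]
  rw [card_filter] at hinterior
  simp only [apply_ite (· = K), sum_ite, sum_const, smul_eq_mul] at hinterior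
  simp only [card_range] at hother hinterior
  split_ifs <;> simp_all <;> omega

end Descents

theorem perm_range'_one_succ (n : ℕ) :
    (List.range' 1 (n + 1)).Perm ((n + 1) :: List.range' 1 n) := by
  rw [List.range'_concat, one_mul, add_comm]
  exact List.perm_append_singleton _ _

theorem findIdx_insertIdx {α : Type*} {p : α → Bool} {x : α} (hx : p x) :
    ∀ {i : ℕ} {l : List α}, i ≤ l.length → (∀ y ∈ l, p y = false) →
      (l.insertIdx i x).findIdx p = i
  | 0, l, _, _ => by simp [List.findIdx_cons, hx]
  | i + 1, [], hi, _ => by simp at hi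
  | i + 1, a :: t, hi, hl => by
    rw [List.insertIdx_succ_cons, List.findIdx_cons, hl a (by simp),
      findIdx_insertIdx hx (by simpa using hi) fun y hy => hl y (by simp [hy])]
    rfl

theorem countP_ofFn {α : Type*} {n : ℕ} (f : Fin n → α) (p : α → Bool) :
    (List.ofFn f).countP p = #{i | p (f i)} := by
  induction n with
  | zero => simp
  | succ m ih =>
    rw [List.ofFn_succ, List.countP_cons, ih, card_filter, card_filter, Fin.sum_univ_succ, add_comm]

theorem countP_insertIdx {α : Type*} (p : α → Bool) (x : α) {l : List α} {i : ℕ}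
    (hi : i ≤ l.length) : (l.insertIdx i x).countP p = l.countP p + if p x then 1 else 0 := by
  rw [(List.perm_insertIdx x l hi).countP_eq, List.countP_cons]

section SignedWords

variable {n : ℕ}

def window (σ : Equiv.Perm (BSet n)) : List ℤ :=
  List.ofFn fun i : Fin n => (σ (posB i)).1

theorem eq_of_window_eq {σ τ : Equiv.Perm (BSet n)} (hσ : IsSigned σ) (hτ : IsSigned τ)
    (h : window σ = window τ) : σ = τ := by
  have hpos : ∀ i, (σ (posB i)).1 = (τ (posB i)).1 := congrFun (List.ofFn_inj.mp h)
  ext x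
  by_cases hx : x.1 = 0
  · rw [(hσ.val_apply_eq_zero_iff x).mpr hx, (hτ.val_apply_eq_zero_iff x).mpr hx]
  obtain ⟨i, rfl | rfl⟩ := BSet.exists_eq_posB hx
  · exact hpos i
  · rw [hσ, hτ, hpos]

/-- Exactly the windows of signed permutations (`isSignedWord_window`,
`IsSignedWord.exists_window_eq`). -/
def IsSignedWord (n : ℕ) (l : List ℤ) : Prop :=
  (l.map Int.natAbs).Perm (List.range' 1 n)

theorem isSignedWord_window {σ : Equiv.Perm (BSet n)} (hσ : IsSigned σ) :
    IsSignedWord n (window σ) := by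
  have hnodup : ((window σ).map Int.natAbs).Nodup := by
    rw [window, List.map_ofFn, List.nodup_ofFn]
    intro i j hij
    rcases Int.natAbs_eq_natAbs_iff.mp hij with he | he
    · have := congrArg Subtype.val (σ.injective (Subtype.ext he))
      simp only [posB] at this
      omega
    · rw [← hσ] at he
      have := congrArg Subtype.val (σ.injective (Subtype.ext he))
      simp only [posB, negB] at this
      omega
  have hsub : (window σ).map Int.natAbs ⊆ List.range' 1 n := by
    intro y hy
    obtain ⟨i, rfl⟩ := List.mem_ofFn.mp (by simpa [window, List.map_ofFn] using hy)
    have hb := Finset.mem_Icc.mp (σ (posB i)).2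
    have hne : (σ (posB i)).1 ≠ 0 := by
      rw [Ne, hσ.val_apply_eq_zero_iff]; simp only [posB]; omega
    rw [List.mem_range'_1]
    omega
  exact (hnodup.subperm hsub).perm_of_length_le (by simp [window])

def oddExtension (l : List ℤ) (t : ℤ) : ℤ :=
  t.sign * l.getD (t.natAbs - 1) 0

theorem oddExtension_neg (l : List ℤ) (t : ℤ) : oddExtension l (-t) = -oddExtension l t := by
  simp [oddExtension, Int.sign_neg]

theorem oddExtension_zero (l : List ℤ) : oddExtension l 0 = 0 := by
  simp [oddExtension]

theorem oddExtension_natCast_add_one (l : List ℤ) (i : ℕ) :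
    oddExtension l (i + 1) = l.getD i 0 := by
  rw [oddExtension, Int.sign_natCast_add_one, one_mul]
  rfl

namespace IsSignedWord

variable {l : List ℤ}

theorem length_eq (h : IsSignedWord n l) : l.length = n := by
  simpa using List.Perm.length_eq h

theorem natAbs_mem (h : IsSignedWord n l) {y : ℤ} (hy : y ∈ l) :
    1 ≤ y.natAbs ∧ y.natAbs ≤ n := by
  have := List.mem_range'_1.mp (h.mem_iff.mp (List.mem_map_of_mem hy))
  omega

theorem natAbs_getD_mem (h : IsSignedWord n l) {j : ℕ} (hj : j < n) :
    1 ≤ (l.getD j 0).natAbs ∧ (l.getD j 0).natAbs ≤ n := by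
  rw [List.getD_eq_getElem _ _ (h.length_eq ▸ hj)]
  exact h.natAbs_mem (List.getElem_mem _)

theorem eq_of_natAbs_getD_eq (h : IsSignedWord n l) {i j : ℕ} (hi : i < n) (hj : j < n)
    (he : (l.getD i 0).natAbs = (l.getD j 0).natAbs) : i = j := by
  have hnodup : (l.map Int.natAbs).Nodup := h.nodup_iff.mpr (List.nodup_range' ..)
  rw [← h.length_eq] at hi hj
  rw [List.getD_eq_getElem _ _ hi, List.getD_eq_getElem _ _ hj] at he
  simpa using hnodup.getElem_inj_iff (hi := by simpa using hi) (hj := by simpa using hj)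
    |>.mp (by simpa using he)

theorem natAbs_oddExtension (h : IsSignedWord n l) {t : ℤ} (ht0 : t ≠ 0) (htn : t.natAbs ≤ n) :
    1 ≤ (oddExtension l t).natAbs ∧ (oddExtension l t).natAbs ≤ n := by
  rw [oddExtension, Int.natAbs_mul, Int.natAbs_sign_of_ne_zero ht0, one_mul]
  exact h.natAbs_getD_mem (by omega)

theorem eq_of_oddExtension_eq (h : IsSignedWord n l) {s t : ℤ} (hs : s.natAbs ≤ n)
    (ht : t.natAbs ≤ n) (hst : oddExtension l s = oddExtension l t) : s = t := by
  by_cases hs0 : s = 0 <;> by_cases ht0 : t = 0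
  · rw [hs0, ht0]
  · have := h.natAbs_oddExtension ht0 ht
    rw [← hst, hs0, oddExtension_zero] at this
    simp at this
  · have := h.natAbs_oddExtension hs0 hs
    rw [hst, ht0, oddExtension_zero] at this
    simp at this
  have habs : s.natAbs = t.natAbs := by
    have := h.eq_of_natAbs_getD_eq (i := s.natAbs - 1) (j := t.natAbs - 1) (by omega) (by omega)
      (by simpa [oddExtension, Int.natAbs_mul, Int.natAbs_sign_of_ne_zero, hs0, ht0]
        using congrArg Int.natAbs hst)
    omega
  rcases Int.natAbs_eq_natAbs_iff.mp habs with rfl | rfl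
  · rfl
  · have := h.natAbs_oddExtension ht0 ht
    rw [oddExtension_neg] at hst
    omega

theorem exists_window_eq (h : IsSignedWord n l) :
    ∃ σ : Equiv.Perm (BSet n), IsSigned σ ∧ window σ = l := by
  have hmem : ∀ x : BSet n, oddExtension l x.1 ∈ Finset.Icc (-(n : ℤ)) n := by
    intro x
    have hx := Finset.mem_Icc.mp x.2
    by_cases hx0 : x.1 = 0
    · simp [hx0, oddExtension_zero]
    · have := h.natAbs_oddExtension hx0 (by omega)
      rw [Finset.mem_Icc]
      omega
  let f : BSet n → BSet n := fun x => ⟨oddExtension l x.1, hmem x⟩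
  have hf : f.Injective := fun x y hxy => Subtype.ext <| h.eq_of_oddExtension_eq
    (by have := Finset.mem_Icc.mp x.2; omega) (by have := Finset.mem_Icc.mp y.2; omega)
    (congrArg Subtype.val hxy)
  refine ⟨Equiv.ofBijective f (Finite.injective_iff_bijective.mp hf), ?_, ?_⟩
  · intro x
    exact oddExtension_neg l x.1
  · refine List.ext_getElem (by simp [window, h.length_eq]) fun i hi _ => ?_
    simp only [window, List.getElem_ofFn]
    exact (oddExtension_natCast_add_one l i).trans (List.getD_eq_getElem _ _ _)

theorem insertIdx (h : IsSignedWord n l) {i : ℕ} (hi : i ≤ n) {x : ℤ} (hx : x.natAbs = n + 1) :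
    IsSignedWord (n + 1) (l.insertIdx i x) := by
  rw [IsSignedWord, List.map_insertIdx, hx]
  refine (List.perm_insertIdx _ _ (by simpa [h.length_eq] using hi)).trans ?_
  exact ((List.perm_cons _).mpr h).trans (perm_range'_one_succ n).symm

theorem exists_eq_insertIdx (h : IsSignedWord (n + 1) l) :
    ∃ (i : ℕ) (hi : i < l.length), l[i].natAbs = n + 1 ∧ IsSignedWord n (l.eraseIdx i) := by
  have hmem : n + 1 ∈ l.map Int.natAbs := h.mem_iff.mpr (List.mem_range'_1.mpr (by omega))
  obtain ⟨y, hy, hyn⟩ := List.mem_map.mp hmem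
  obtain ⟨i, hi, rfl⟩ := List.getElem_of_mem hy
  refine ⟨i, hi, hyn, ?_⟩
  have hperm : (l.map Int.natAbs).Perm ((n + 1) :: (l.eraseIdx i).map Int.natAbs) := by
    conv_lhs => rw [← List.insertIdx_eraseIdx_getElem hi]
    rw [List.map_insertIdx, hyn]
    exact List.perm_insertIdx _ _ (by simp [List.length_eraseIdx_of_lt hi]; omega)
  exact (List.perm_cons _).mp (hperm.symm.trans (List.Perm.trans h (perm_range'_one_succ n)))

theorem eq_of_insertIdx_eq {l₁ l₂ : List ℤ} (h₁ : IsSignedWord n l₁) (h₂ : IsSignedWord n l₂)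
    {i₁ i₂ : ℕ} (hi₁ : i₁ ≤ n) (hi₂ : i₂ ≤ n) {x₁ x₂ : ℤ} (hx₁ : x₁.natAbs = n + 1)
    (hx₂ : x₂.natAbs = n + 1) (heq : l₁.insertIdx i₁ x₁ = l₂.insertIdx i₂ x₂) :
    l₁ = l₂ ∧ i₁ = i₂ ∧ x₁ = x₂ := by
  -- the inserted letter is the only one of absolute value `n + 1`, so its position is recovered
  let p : ℤ → Bool := fun y => y.natAbs = n + 1
  have hfind {l : List ℤ} {i : ℕ} {x : ℤ} (hl : IsSignedWord n l) (hi : i ≤ n)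
      (hx : x.natAbs = n + 1) : (l.insertIdx i x).findIdx p = i :=
    findIdx_insertIdx (by simpa [p] using hx) (by rwa [hl.length_eq])
      fun y hy => by have := hl.natAbs_mem hy; simp only [p, decide_eq_false_iff_not]; omega
  have hi : i₁ = i₂ := (hfind h₁ hi₁ hx₁).symm.trans (heq ▸ hfind h₂ hi₂ hx₂)
  subst hi
  have hx : x₁ = x₂ := by
    simpa [List.getElem?_insertIdx_self, h₁.length_eq, h₂.length_eq, hi₁]
      using congrArg (·[i₁]?) heq
  subst hx
  exact ⟨List.insertIdx_injective i₁ x₁ heq, rfl, rfl⟩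

end IsSignedWord

noncomputable def signedWords (n : ℕ) : Finset (List ℤ) :=
  (univ.filter fun σ : Equiv.Perm (BSet n) => IsSigned σ).image window

theorem mem_signedWords {l : List ℤ} : l ∈ signedWords n ↔ IsSignedWord n l := by
  simp only [signedWords, mem_image, mem_filter, mem_univ, true_and]
  exact ⟨fun ⟨σ, hσ, hl⟩ => hl ▸ isSignedWord_window hσ, fun h => h.exists_window_eq⟩

theorem signedWords_zero : signedWords 0 = {[]} := by
  ext l
  simp [mem_signedWords, IsSignedWord]

theorem card_filter_signedWords (Q : List ℤ → Prop) [DecidablePred Q] :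
    #{l ∈ signedWords n | Q l} = #{σ : Equiv.Perm (BSet n) | IsSigned σ ∧ Q (window σ)} := by
  rw [signedWords, filter_image, ← filter_filter, card_image_of_injOn]
  intro σ hσ τ hτ
  exact eq_of_window_eq (mem_filter.mp (mem_filter.mp hσ).1).2
    (mem_filter.mp (mem_filter.mp hτ).1).2

theorem eulerianD_eq_card_signedWords (n k : ℕ) :
    eulerianD n k =
      #{l ∈ signedWords n | descCount (0 :: l) = k ∧ Even (l.countP (· < 0))} := by
  rw [eulerianD, Fintype.card_subtype, card_filter_signedWords]
  refine congrArg card (filter_congr fun σ _ => ?_)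
  simp only [descB, negCount, window, countP_ofFn, decide_eq_true_eq]
  tauto

theorem sum_signedWords_succ {M : Type*} [AddCommMonoid M] (F : List ℤ → M) :
    ∑ l ∈ signedWords (n + 1), F l =
      ∑ l ∈ signedWords n, ∑ i ∈ range (n + 1), ∑ x ∈ {(n : ℤ) + 1, -((n : ℤ) + 1)},
        F (l.insertIdx i x) := by
  simp only [← sum_product']
  symm
  refine sum_bij (fun z _ => z.1.insertIdx z.2.1 z.2.2) ?_ ?_ ?_ (fun _ _ => rfl)
  · rintro ⟨l, i, x⟩ hz
    simp only [mem_product, mem_signedWords, mem_range, mem_insert, mem_singleton] at hz ⊢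
    exact hz.1.insertIdx (by omega) (by omega)
  · rintro ⟨l₁, i₁, x₁⟩ hz₁ ⟨l₂, i₂, x₂⟩ hz₂ heq
    simp only [mem_product, mem_signedWords, mem_range, mem_insert, mem_singleton] at hz₁ hz₂ heq
    obtain ⟨hl, hi, hx⟩ := hz₁.1.eq_of_insertIdx_eq hz₂.1 (by omega) (by omega) (by omega)
      (by omega) heq
    rw [hl, hi, hx]
  · intro l hl
    obtain ⟨i, hi, hx, hl'⟩ := (mem_signedWords.mp hl).exists_eq_insertIdx
    refine ⟨(l.eraseIdx i, i, l[i]), ?_, List.insertIdx_eraseIdx_getElem hi⟩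
    simp only [mem_product, mem_signedWords, mem_range, mem_insert, mem_singleton]
    exact ⟨hl', by rw [(mem_signedWords.mp hl).length_eq] at hi; omega, by omega⟩

end SignedWords

section Insertion

variable {n : ℕ} {l : List ℤ}

namespace IsSignedWord

theorem card_filter_descCount_insertIdx_top (h : IsSignedWord n l) (K : ℕ) :
    #{i ∈ range (n + 1) | descCount (0 :: l.insertIdx i ((n : ℤ) + 1)) = K} =
      (if descCount (0 :: l) = K then descCount (0 :: l) + 1 else 0)
        + (if descCount (0 :: l) + 1 = K then n - descCount (0 :: l) else 0) := by
  have hbig : ∀ y ∈ (0 : ℤ) :: l, y < n + 1 := by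
    simp only [List.mem_cons, forall_eq_or_imp]
    exact ⟨by omega, fun y hy => by have := h.natAbs_mem hy; omega⟩
  have := card_filter_descCount_insertIdx 0 l (Or.inl hbig) K
  rw [h.length_eq] at this
  rw [this, descCount_cons_append_singleton,
    if_neg (not_lt.mpr (hbig _ List.getLastD_mem_cons).le)]
  split_ifs <;> omega

theorem card_filter_descCount_insertIdx_bot (h : IsSignedWord n l) (K : ℕ) :
    #{i ∈ range (n + 1) | descCount (0 :: l.insertIdx i (-((n : ℤ) + 1))) = K} =
      (if descCount (0 :: l) = K then descCount (0 :: l) else 0)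
        + (if descCount (0 :: l) + 1 = K then n - descCount (0 :: l) + 1 else 0) := by
  have hsmall : ∀ y ∈ (0 : ℤ) :: l, -((n : ℤ) + 1) < y := by
    simp only [List.mem_cons, forall_eq_or_imp]
    exact ⟨by omega, fun y hy => by have := h.natAbs_mem hy; omega⟩
  have hle : descCount (0 :: l) ≤ n := h.length_eq ▸ descCount_cons_le_length 0 l
  have := card_filter_descCount_insertIdx 0 l (Or.inr hsmall) K
  rw [h.length_eq] at this
  rw [this, descCount_cons_append_singleton, if_pos (hsmall _ List.getLastD_mem_cons)]
  split_ifs <;> omega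

theorem sum_insertIdx_weight (h : IsSignedWord n l) (K : ℕ) (s : ℤ) :
    ∑ i ∈ range (n + 1), ∑ x ∈ {(n : ℤ) + 1, -((n : ℤ) + 1)},
        (if descCount (0 :: l.insertIdx i x) = K then s ^ (l.insertIdx i x).countP (· < 0) else 0) =
      s ^ l.countP (· < 0) *
        ((if descCount (0 :: l) = K then descCount (0 :: l) + 1 + s * descCount (0 :: l) else 0)
          + (if descCount (0 :: l) + 1 = K then
              (n - descCount (0 :: l)) + s * (n - descCount (0 :: l) + 1) else 0)) := by
  have hle : descCount (0 :: l) ≤ n := h.length_eq ▸ descCount_cons_le_length 0 l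
  have hcount {x : ℤ} (i : ℕ) (hi : i ∈ range (n + 1)) : (l.insertIdx i x).countP (· < 0) =
      l.countP (· < 0) + if x < 0 then 1 else 0 := by
    rw [countP_insertIdx _ _ (by rw [h.length_eq]; exact Nat.le_of_lt_succ (mem_range.mp hi))]
    simp
  have hsum (x : ℤ) : ∑ i ∈ range (n + 1),
      (if descCount (0 :: l.insertIdx i x) = K then s ^ (l.insertIdx i x).countP (· < 0) else 0) =
      #{i ∈ range (n + 1) | descCount (0 :: l.insertIdx i x) = K} *
        s ^ (l.countP (· < 0) + if x < 0 then 1 else 0) := by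
    rw [← sum_filter, sum_congr rfl fun i hi => by rw [hcount i (mem_filter.mp hi).1],
      sum_const, nsmul_eq_mul]
  have htop : ¬((n : ℤ) + 1 < 0) := by omega
  have hbot : -((n : ℤ) + 1) < 0 := by omega
  rw [sum_comm, sum_pair (by omega), hsum, hsum, h.card_filter_descCount_insertIdx_top,
    h.card_filter_descCount_insertIdx_bot]
  simp only [htop, hbot, if_true, if_false, add_zero, pow_succ]
  push_cast [Nat.cast_sub hle]
  split_ifs <;> ring

end IsSignedWord

end Insertion

section Weighted

/-- At `s = 1` this counts type B permutations with `k` descents; at `s = -1` it is the excess of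
those with an even number of negative entries over those with an odd number. -/
noncomputable def weightedEulerianB (n k : ℕ) (s : ℤ) : ℤ :=
  ∑ l ∈ signedWords n with descCount (0 :: l) = k, s ^ l.countP (· < 0)

theorem weightedEulerianB_succ (n K : ℕ) (s : ℤ) :
    weightedEulerianB (n + 1) K s =
      ∑ l ∈ signedWords n, s ^ l.countP (· < 0) *
        ((if descCount (0 :: l) = K then descCount (0 :: l) + 1 + s * descCount (0 :: l) else 0)
          + (if descCount (0 :: l) + 1 = K then
              (n - descCount (0 :: l)) + s * (n - descCount (0 :: l) + 1) else 0)) := by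
  rw [weightedEulerianB, sum_filter, sum_signedWords_succ]
  exact sum_congr rfl fun l hl => (mem_signedWords.mp hl).sum_insertIdx_weight K s

theorem weightedEulerianB_eq_zero_of_lt {n k : ℕ} (h : n < k) (s : ℤ) :
    weightedEulerianB n k s = 0 := by
  refine sum_eq_zero fun l hl => absurd (mem_filter.mp hl).2 ?_
  have := (mem_signedWords.mp (mem_filter.mp hl).1).length_eq ▸ descCount_cons_le_length 0 l
  omega

theorem weightedEulerianB_succ_zero (n : ℕ) (s : ℤ) :
    weightedEulerianB (n + 1) 0 s = weightedEulerianB n 0 s := by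
  rw [weightedEulerianB_succ, weightedEulerianB, sum_filter]
  refine sum_congr rfl fun l _ => ?_
  by_cases h : descCount (0 :: l) = 0 <;> simp [h]

theorem weightedEulerianB_succ_succ (n m : ℕ) (s : ℤ) :
    weightedEulerianB (n + 1) (m + 1) s =
      (m + 2 + s * (m + 1)) * weightedEulerianB n (m + 1) s
        + (n - m + s * (n - m + 1)) * weightedEulerianB n m s := by
  rw [weightedEulerianB_succ, weightedEulerianB, weightedEulerianB, sum_filter, sum_filter,
    mul_sum, mul_sum, ← sum_add_distrib]
  refine sum_congr rfl fun l _ => ?_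
  simp only [Nat.add_right_cancel_iff]
  generalize descCount (0 :: l) = D
  split_ifs <;> first | omega | (subst_vars; push_cast; ring)

theorem weightedEulerianB_zero_right (n : ℕ) (s : ℤ) : weightedEulerianB n 0 s = 1 := by
  induction n with
  | zero =>
    have : descCount [(0 : ℤ)] = 0 := rfl
    simp [weightedEulerianB, signedWords_zero, filter_singleton, this]
  | succ n ih => rw [weightedEulerianB_succ_zero, ih]

theorem weightedEulerianB_self (n : ℕ) (s : ℤ) : weightedEulerianB n n s = s ^ n := by
  induction n with
  | zero => simpa using weightedEulerianB_zero_right 0 s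
  | succ n ih =>
    rw [weightedEulerianB_succ_succ, ih, weightedEulerianB_eq_zero_of_lt (Nat.lt_succ_self n)]
    ring

theorem weightedEulerianB_neg_one (n k : ℕ) :
    weightedEulerianB n k (-1) = (-1) ^ k * n.choose k := by
  induction n generalizing k with
  | zero =>
    rcases k with _ | k
    · simp [weightedEulerianB_zero_right]
    · simp [weightedEulerianB_eq_zero_of_lt (Nat.succ_pos k)]
  | succ n ih =>
    rcases k with _ | m
    · simp [weightedEulerianB_zero_right]
    · rw [weightedEulerianB_succ_succ, ih, ih, Nat.choose_succ_succ']
      push_cast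
      ring

theorem two_mul_eulerianD (n k : ℕ) :
    2 * (eulerianD n k : ℤ) = weightedEulerianB n k 1 + weightedEulerianB n k (-1) := by
  rw [eulerianD_eq_card_signedWords, weightedEulerianB, weightedEulerianB, ← sum_add_distrib,
    ← filter_filter, card_filter, Nat.cast_sum, mul_sum]
  refine sum_congr rfl fun l _ => ?_
  rcases Nat.even_or_odd (l.countP (· < 0)) with h | h
  · simp [h, h.neg_one_pow]
  · simp [Nat.not_even_iff_odd.mpr h, h.neg_one_pow]

end Weighted

theorem eulerianD_zero_right (n : ℕ) : eulerianD n 0 = 1 := by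
  have := two_mul_eulerianD n 0
  rw [weightedEulerianB_zero_right, weightedEulerianB_zero_right] at this
  omega

theorem two_mul_eulerianD_self (n : ℕ) : 2 * (eulerianD n n : ℤ) = 1 + (-1) ^ n := by
  rw [two_mul_eulerianD, weightedEulerianB_self, weightedEulerianB_self, one_pow]

theorem eulerianD_succ_succ (n m : ℕ) :
    (eulerianD (n + 1) (m + 1) : ℤ) = (2 * m + 3) * eulerianD n (m + 1)
      + (2 * n - 2 * m + 1) * eulerianD n m + (-1) ^ (m + 1) * n.choose m := by
  have hchoose : ((m : ℤ) + 1) * n.choose (m + 1) = (n - m) * n.choose m := by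
    rcases le_or_gt m n with hmn | hmn
    · have := Nat.choose_succ_right_eq n m
      zify [hmn] at this
      linear_combination this
    · simp [Nat.choose_eq_zero_of_lt hmn, Nat.choose_eq_zero_of_lt (Nat.lt_succ_of_lt hmn)]
  have key : 2 * (eulerianD (n + 1) (m + 1) : ℤ) = 2 * ((2 * m + 3) * eulerianD n (m + 1)
      + (2 * n - 2 * m + 1) * eulerianD n m + (-1) ^ (m + 1) * n.choose m) := by
    linear_combination two_mul_eulerianD (n + 1) (m + 1) + weightedEulerianB_succ_succ n m 1
      + weightedEulerianB_succ_succ n m (-1) - (2 * m + 3) * two_mul_eulerianD n (m + 1)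
      - (2 * n - 2 * m + 1) * two_mul_eulerianD n m
      - (2 * m + 2) * weightedEulerianB_neg_one n (m + 1)
      - (2 * n - 2 * m + 2) * weightedEulerianB_neg_one n m + 2 * (-1) ^ m * hchoose
  linarith

end EulerianD

theorem stmt10 :
    (∀ n : ℕ, eulerianD n 0 = 1) ∧
    (∀ n : ℕ, 2 * (eulerianD n n : ℤ) = 1 + (-1) ^ n) ∧
    (∀ n k : ℕ, 0 < k → k < n →
      (eulerianD n k : ℤ) = (2 * (k : ℤ) + 1) * eulerianD (n - 1) k
        + (2 * (n : ℤ) - 2 * (k : ℤ) + 1) * eulerianD (n - 1) (k - 1)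
        + (-1) ^ k * ((n - 1).choose (k - 1) : ℤ)) := by
  refine ⟨EulerianD.eulerianD_zero_right, EulerianD.two_mul_eulerianD_self,
    fun n k hk hkn => ?_⟩
  obtain ⟨m, rfl⟩ : ∃ m, k = m + 1 := ⟨k - 1, by omega⟩
  obtain ⟨n, rfl⟩ : ∃ n', n = n' + 1 := ⟨n - 1, by omega⟩
  simp only [Nat.add_sub_cancel, EulerianD.eulerianD_succ_succ]
  push_cast
  ring
end
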